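/- arXiv:1907.01917 — 7 statements merged into one kernel-verified Lean document; each statement's English description precedes it below -/
import Mathlib

section
/- Let (X, ρ₁) be a weighted space, let q : X → q(X) be a continuous surjection from (X, ρ₁) onto a weighted space (q(X), ρ₂), and let P⁽¹⁾ be a generalized Feller semigroup on 𝓑^{ρ₁}(X). Assume ρ₂(q(x)) ≤ ρ₁(x) for all x ∈ X. Let D be a dense subspace of 𝓑^{ρ₂}(q(X)) such that for every f ∈ D and every t ≥ 0 there exists g ∈ 𝓑^{ρ₂}(q(X)) with P⁽¹⁾_t(f ∘ q) = g ∘ q, and assume there is a constant C ≥ 1 such that for all t ≥ 0 and all f ∈ 𝓑^{ρ₂}(q(X)) with |f(y)| ≤ ρ₂(y) for all y ∈ q(X), one has |P⁽¹⁾_t(f ∘ q)(x)| ≤ C ρ₂(q(x)) for all x ∈ X (this renders the paper's condition P⁽¹⁾_t(ρ₂∘q) ≤ C ρ₂∘q). Then there exists a generalized Feller semigroup P⁽²⁾ on 𝓑^{ρ₂}(q(X)) such that P⁽¹⁾_t(f ∘ q) = (P⁽²⁾_t f) ∘ q for all f ∈ 𝓑^{ρ₂}(q(X)) and all t ≥ 0.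 -/
open scoped ENNReal NNReal
open Filter Set MeasureTheory TopologicalSpace

noncomputable section

/-- An admissible weight function on a topological space: strictly positive with compact
and separable sublevel sets. -/
structure AdmissibleWeight {X : Type*} [TopologicalSpace X] (ρ : X → ℝ) : Prop where
  pos : ∀ x, 0 < ρ x
  isCompact_sublevel : ∀ R : ℝ, 0 < R → IsCompact {x | ρ x ≤ R}
  isSeparable_sublevel : ∀ R : ℝ, 0 < R → TopologicalSpace.IsSeparable {x | ρ x ≤ R}

/-- The Banach space of bounded real-valued functions on `X`, with the sup norm. -/
abbrev BddFun (X : Type*) := lp (fun _ : X => ℝ) ∞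

/-- Bounded continuous functions, divided by the weight `ρ`.  Under the isometric
identification `f ↦ f / ρ` of `B^ρ(X)` with bounded functions, this is the image of
`C_b(X)`. -/
def preCalB {X : Type*} [TopologicalSpace X] (ρ : X → ℝ) : Submodule ℝ (BddFun X) where
  carrier := {g | ∃ f : X → ℝ, Continuous f ∧ (∃ C, ∀ x, |f x| ≤ C) ∧ ∀ x, g x = f x / ρ x}
  add_mem' := by
    rintro g₁ g₂ ⟨f₁, hc₁, ⟨C₁, hb₁⟩, h₁⟩ ⟨f₂, hc₂, ⟨C₂, hb₂⟩, h₂⟩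
    refine ⟨f₁ + f₂, hc₁.add hc₂, ⟨C₁ + C₂, fun x => ?_⟩, fun x => ?_⟩
    · calc |(f₁ + f₂) x| ≤ |f₁ x| + |f₂ x| := abs_add_le _ _
        _ ≤ C₁ + C₂ := add_le_add (hb₁ x) (hb₂ x)
    · have : (g₁ + g₂ : BddFun X) x = g₁ x + g₂ x := by
        rw [lp.coeFn_add]; rfl
      rw [this, h₁ x, h₂ x]
      simp [Pi.add_apply, add_div]
  zero_mem' := ⟨0, continuous_const, ⟨0, by simp⟩, fun x => by simp⟩
  smul_mem' := by
    rintro c g ⟨f, hc, ⟨C, hb⟩, h⟩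
    refine ⟨fun x => c * f x, continuous_const.mul hc, ⟨|c| * C, fun x => ?_⟩, fun x => ?_⟩
    · rw [abs_mul]
      exact mul_le_mul_of_nonneg_left (hb x) (abs_nonneg c)
    · have : (c • g : BddFun X) x = c * g x := by
        rw [lp.coeFn_smul]; rfl
      rw [this, h x, mul_div_assoc]

/-- `𝓑^ρ(X)`: the closure of (the image of) the bounded continuous functions in `B^ρ(X)`,
realized under the isometric identification `f ↦ f / ρ` as a closed subspace of the bounded
functions on `X`. -/
def calB {X : Type*} [TopologicalSpace X] (ρ : X → ℝ) : Submodule ℝ (BddFun X) :=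
  (preCalB ρ).topologicalClosure

variable {X : Type*} [TopologicalSpace X] {ρ : X → ℝ}

/-- The value at `x` of (the `f/ρ` representation of) an element of `𝓑^ρ(X)`;
this equals `ρ(x)⁻¹ f(x)`. -/
def scaledApp (f : calB ρ) (x : X) : ℝ := (f : BddFun X) x

/-- The true value `f(x)` of an element of `𝓑^ρ(X)`. -/
def valOf (f : calB ρ) (x : X) : ℝ := ρ x * scaledApp f x

/-- A function `F : X → ℝ` belongs to `𝓑^ρ(X)`. -/
def MemCalB {X : Type*} [TopologicalSpace X] (ρ : X → ℝ) (F : X → ℝ) : Prop :=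
  ∃ g : BddFun X, g ∈ calB ρ ∧ ∀ x, g x = F x / ρ x

/-- A generalized Feller semigroup on `𝓑^ρ(X)`. -/
structure IsGenFellerSemigroup {X : Type*} [TopologicalSpace X] (ρ : X → ℝ)
    (P : ℝ≥0 → ((calB ρ) →L[ℝ] (calB ρ))) : Prop where
  map_zero : P 0 = ContinuousLinearMap.id ℝ (calB ρ)
  semigroup : ∀ s t : ℝ≥0, P (s + t) = (P s).comp (P t)
  tendsto_apply : ∀ (f : calB ρ) (x : X),
    Tendsto (fun t : ℝ≥0 => valOf (P t f) x) (nhds 0) (nhds (valOf f x))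
  norm_bound : ∃ (C : ℝ) (ε : ℝ≥0), 0 < ε ∧ ∀ t ≤ ε, ‖P t‖ ≤ C
  pos : ∀ (t : ℝ≥0) (f : calB ρ), (∀ x, 0 ≤ valOf f x) → ∀ x, 0 ≤ valOf (P t f) x

/-! The pullback `M : f ↦ f ∘ q` is injective (as `q` is onto) and bounded (as `ρ₂ ∘ q ≤ ρ₁`).
Rescaling the growth estimate shows that whenever `P⁽¹⁾_t (M f) = M g` we have
`‖g‖ ≤ C ‖f‖`, so on the dense subspace `D` the operator `P⁽¹⁾_t` descends to an operator
bounded by `C`, which extends to all of `𝓑^{ρ₂}`; the intertwining relation passes to the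
closure because both of its sides are continuous in `f`. The semigroup axioms, the pointwise
continuity and the positivity of `P⁽²⁾` are then read off from those of `P⁽¹⁾` through `M`. -/

instance : CompleteSpace (calB ρ) := Submodule.topologicalClosure.completeSpace _

theorem valOf_zero (x : X) : valOf (0 : calB ρ) x = 0 := by
  simp [valOf, scaledApp]

theorem valOf_smul (c : ℝ) (f : calB ρ) (x : X) : valOf (c • f) x = c * valOf f x := by
  simp only [valOf, scaledApp, Submodule.coe_smul, lp.coeFn_smul, Pi.smul_apply, smul_eq_mul]
  ring

theorem valOf_injective (hρ : ∀ x, ρ x ≠ 0) : Function.Injective (valOf : calB ρ → X → ℝ) :=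
  fun _ _ h => Subtype.ext <| lp.ext <| funext fun x =>
    mul_left_cancel₀ (hρ x) (congrFun h x)

theorem abs_valOf_le (hρ : ∀ x, 0 ≤ ρ x) (f : calB ρ) (x : X) : |valOf f x| ≤ ‖f‖ * ρ x := by
  rw [valOf, abs_mul, abs_of_nonneg (hρ x), mul_comm]
  exact mul_le_mul_of_nonneg_right (lp.norm_apply_le_norm ENNReal.top_ne_zero (f : BddFun X) x)
    (hρ x)

theorem norm_le_of_abs_valOf_le (hρ : ∀ x, 0 < ρ x) {f : calB ρ} {c : ℝ} (hc : 0 ≤ c)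
    (h : ∀ x, |valOf f x| ≤ c * ρ x) : ‖f‖ ≤ c := by
  refine lp.norm_le_of_forall_le (f := (f : BddFun X)) hc fun x => ?_
  refine le_of_mul_le_mul_right ?_ (hρ x)
  simpa [valOf, scaledApp, abs_mul, abs_of_pos (hρ x), mul_comm] using h x

theorem abs_valOf_apply_le_of_unitBall {Y : Type*} [TopologicalSpace Y] {σ : Y → ℝ}
    (hρ : ∀ x, 0 ≤ ρ x) (L : calB ρ →ₗ[ℝ] calB σ) {w : Y → ℝ}
    (hL : ∀ f, (∀ x, |valOf f x| ≤ ρ x) → ∀ y, |valOf (L f) y| ≤ w y) (f : calB ρ) (y : Y) :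
    |valOf (L f) y| ≤ ‖f‖ * w y := by
  rcases eq_or_ne f 0 with rfl | hf
  · simp [valOf_zero]
  have hf' : 0 < ‖f‖ := norm_pos_iff.mpr hf
  have hunit : ∀ x, |valOf (‖f‖⁻¹ • f) x| ≤ ρ x := fun x => by
    rw [valOf_smul, abs_mul, abs_inv, abs_norm, inv_mul_le_iff₀ hf']
    exact abs_valOf_le hρ f x
  have := hL _ hunit y
  rwa [map_smul, valOf_smul, abs_mul, abs_inv, abs_norm, inv_mul_le_iff₀ hf'] at this

section Pullback

variable {Y : Type*} [TopologicalSpace Y] {σ : Y → ℝ} {q : X → Y} {M : calB σ →ₗ[ℝ] calB ρ}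

theorem injective_of_valOf_pullback (hσ : ∀ y, σ y ≠ 0) (hq : Function.Surjective q)
    (hM : ∀ f x, valOf (M f) x = valOf f (q x)) : Function.Injective M := by
  refine fun f g hfg => valOf_injective hσ <| funext fun y => ?_
  obtain ⟨x, rfl⟩ := hq y
  rw [← hM, ← hM, hfg]

theorem norm_pullback_le (hρ : ∀ x, 0 < ρ x) (hσ : ∀ y, 0 ≤ σ y) (hσq : ∀ x, σ (q x) ≤ ρ x)
    (hM : ∀ f x, valOf (M f) x = valOf f (q x)) (f : calB σ) : ‖M f‖ ≤ ‖f‖ :=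
  norm_le_of_abs_valOf_le hρ (norm_nonneg f) fun x => by
    rw [hM]
    exact (abs_valOf_le hσ f (q x)).trans (by gcongr; exact hσq x)

theorem norm_le_of_apply_pullback_eq (hσ : ∀ y, 0 < σ y) (hq : Function.Surjective q)
    (hM : ∀ f x, valOf (M f) x = valOf f (q x)) (A : calB ρ →ₗ[ℝ] calB ρ) {C : ℝ} (hC : 0 ≤ C)
    (hgrow : ∀ f, (∀ y, |valOf f y| ≤ σ y) → ∀ x, |valOf (A (M f)) x| ≤ C * σ (q x))
    {f g : calB σ} (hfg : A (M f) = M g) : ‖g‖ ≤ C * ‖f‖ := by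
  refine norm_le_of_abs_valOf_le hσ (by positivity) fun y => ?_
  obtain ⟨x, rfl⟩ := hq y
  have := abs_valOf_apply_le_of_unitBall (fun y => (hσ y).le) (A ∘ₗ M) hgrow f x
  rw [LinearMap.comp_apply, hfg, hM] at this
  linarith

theorem IsGenFellerSemigroup.of_intertwining (hσ : ∀ y, σ y ≠ 0) (hq : Function.Surjective q)
    (hM : ∀ f x, valOf (M f) x = valOf f (q x)) {P : ℝ≥0 → calB ρ →L[ℝ] calB ρ}
    (hP : IsGenFellerSemigroup ρ P) {Q : ℝ≥0 → calB σ →L[ℝ] calB σ}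
    (hPQ : ∀ t f, P t (M f) = M (Q t f)) {C : ℝ} (hQ : ∀ t, ‖Q t‖ ≤ C) :
    IsGenFellerSemigroup σ Q := by
  have hMinj := injective_of_valOf_pullback hσ hq hM
  refine
    { map_zero := ContinuousLinearMap.ext fun f => hMinj ?_
      semigroup := fun s t => ContinuousLinearMap.ext fun f => hMinj ?_
      tendsto_apply := fun f y => ?_
      norm_bound := ⟨C, 1, one_pos, fun t _ => hQ t⟩
      pos := fun t f hf y => ?_ }
  · rw [← hPQ, hP.map_zero]
    rfl
  · rw [← hPQ, hP.semigroup, ContinuousLinearMap.comp_apply, hPQ, hPQ,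
      ContinuousLinearMap.comp_apply]
  · obtain ⟨x, rfl⟩ := hq y
    simpa only [hPQ, hM] using hP.tendsto_apply (M f) x
  · obtain ⟨x, rfl⟩ := hq y
    simpa only [hPQ, hM] using hP.pos t (M f) (fun x => by rw [hM]; exact hf (q x)) x

end Pullback

theorem exists_continuousLinearMap_intertwining {𝕜 E F : Type*} [NontriviallyNormedField 𝕜]
    [NormedAddCommGroup E] [NormedSpace 𝕜 E] [CompleteSpace E]
    [NormedAddCommGroup F] [NormedSpace 𝕜 F]
    {M : E →L[𝕜] F} (hM : Function.Injective M) (A : F →L[𝕜] F)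
    {D : Submodule 𝕜 E} (hD : Dense (D : Set E)) (hAD : ∀ f ∈ D, ∃ g, A (M f) = M g) {C : ℝ}
    (hC : ∀ f ∈ D, ∀ g, A (M f) = M g → ‖g‖ ≤ C * ‖f‖) :
    ∃ B : E →L[𝕜] E, ∀ f, A (M f) = M (B f) := by
  let S : D →ₗ[𝕜] LinearMap.range (M : E →ₗ[𝕜] F) :=
    ((A : F →ₗ[𝕜] F) ∘ₗ (M : E →ₗ[𝕜] F) ∘ₗ D.subtype).codRestrict _
      fun f => LinearMap.mem_range.mpr ((hAD f f.2).imp fun _ h => h.symm)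
  let T : D →ₗ[𝕜] E := (LinearEquiv.ofInjective (M : E →ₗ[𝕜] F) hM).symm.toLinearMap ∘ₗ S
  have hT : ∀ f : D, A (M f) = M (T f) := fun f =>
    (LinearEquiv.ofInjective_symm_apply (h := hM) _ (S f)).symm
  have hDense : DenseRange D.subtype := by simpa [DenseRange] using hD
  have hTC : ∀ f : D, ‖T f‖ ≤ C * ‖D.subtype f‖ := fun f => hC f f.2 _ (hT f)
  set B := T.extendOfNorm D.subtype
  have hAMB : ⇑(A.comp M) = M.comp B :=
    Continuous.ext_on hD (A.comp M).continuous (M.comp B).continuous fun f hf => by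
      have hB : B f = T ⟨f, hf⟩ := LinearMap.extendOfNorm_eq hDense ⟨C, hTC⟩ ⟨f, hf⟩
      simp only [ContinuousLinearMap.coe_comp, Function.comp_apply, hB]
      exact hT ⟨f, hf⟩
  exact ⟨B, congrFun hAMB⟩

universe u

theorem invariant_subspace_genFeller_general
    {X : Type u} [TopologicalSpace X]
    {X₂ : Type u} [TopologicalSpace X₂]
    {ρ₁ : X → ℝ} (hρ₁ : AdmissibleWeight ρ₁)
    {ρ₂ : X₂ → ℝ} (hρ₂ : AdmissibleWeight ρ₂)
    (q : X → X₂) (hqs : Function.Surjective q)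
    (hρq : ∀ x, ρ₂ (q x) ≤ ρ₁ x)
    (P1 : ℝ≥0 → (calB ρ₁) →L[ℝ] (calB ρ₁)) (hP1 : IsGenFellerSemigroup ρ₁ P1)
    (M : (calB ρ₂) →ₗ[ℝ] (calB ρ₁))
    (hM : ∀ (f : calB ρ₂) (x : X), valOf (M f) x = valOf f (q x))
    (D : Submodule ℝ (calB ρ₂)) (hD : Dense (D : Set (calB ρ₂)))
    (hinv : ∀ t : ℝ≥0, ∀ f ∈ D, ∃ g : calB ρ₂, P1 t (M f) = M g)
    (C : ℝ) (hC : 1 ≤ C)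
    (hgrow : ∀ (t : ℝ≥0) (f : calB ρ₂), (∀ y, |valOf f y| ≤ ρ₂ y) →
      ∀ x, |valOf (P1 t (M f)) x| ≤ C * ρ₂ (q x)) :
    ∃ P2 : ℝ≥0 → (calB ρ₂) →L[ℝ] (calB ρ₂),
      IsGenFellerSemigroup ρ₂ P2 ∧
      ∀ (t : ℝ≥0) (f : calB ρ₂), P1 t (M f) = M (P2 t f) := by
  have hC₀ : 0 ≤ C := zero_le_one.trans hC
  let Mc : calB ρ₂ →L[ℝ] calB ρ₁ := M.mkContinuous 1 fun f => by
    simpa using norm_pullback_le hρ₁.pos (fun y => (hρ₂.pos y).le) hρq hM f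
  have hMinj : Function.Injective Mc :=
    injective_of_valOf_pullback (fun y => (hρ₂.pos y).ne') hqs hM
  have hbound : ∀ t (f g : calB ρ₂), P1 t (M f) = M g → ‖g‖ ≤ C * ‖f‖ := fun t _ _ =>
    norm_le_of_apply_pullback_eq hρ₂.pos hqs hM (P1 t) hC₀ (hgrow t)
  choose P2 hP2 using fun t => exists_continuousLinearMap_intertwining hMinj (P1 t) hD (hinv t)
    fun f _ g => hbound t f g
  have hP2norm : ∀ t, ‖P2 t‖ ≤ C := fun t =>
    (P2 t).opNorm_le_bound hC₀ fun f => hbound t f _ (hP2 t f)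
  exact ⟨P2, .of_intertwining (fun y => (hρ₂.pos y).ne') hqs hM hP1 hP2 hP2norm, hP2⟩

/-- **Invariant subspaces of generalized Feller semigroups.**  If `P⁽¹⁾` on `𝓑^{ρ₁}(X)`
maps pullbacks along `q` of a dense set of functions in `𝓑^{ρ₂}(q(X))` to pullbacks, and
satisfies the growth estimate `P⁽¹⁾_t(ρ₂ ∘ q) ≤ C ρ₂ ∘ q`, then it induces a generalized
Feller semigroup `P⁽²⁾` on `𝓑^{ρ₂}(q(X))` with `P⁽¹⁾_t (f ∘ q) = (P⁽²⁾_t f) ∘ q`.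
Here `M` is the pullback operator `f ↦ f ∘ q`. -/
theorem invariant_subspace_genFeller
    {X : Type u} [TopologicalSpace X] [T2Space X] [CompletelyRegularSpace X]
    {X₂ : Type u} [TopologicalSpace X₂] [T2Space X₂] [CompletelyRegularSpace X₂]
    {ρ₁ : X → ℝ} (hρ₁ : AdmissibleWeight ρ₁)
    {ρ₂ : X₂ → ℝ} (hρ₂ : AdmissibleWeight ρ₂)
    (q : X → X₂) (hqc : Continuous q) (hqs : Function.Surjective q)
    (hρq : ∀ x, ρ₂ (q x) ≤ ρ₁ x)
    (P1 : ℝ≥0 → (calB ρ₁) →L[ℝ] (calB ρ₁)) (hP1 : IsGenFellerSemigroup ρ₁ P1)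
    (M : (calB ρ₂) →ₗ[ℝ] (calB ρ₁))
    (hM : ∀ (f : calB ρ₂) (x : X), valOf (M f) x = valOf f (q x))
    (D : Submodule ℝ (calB ρ₂)) (hD : Dense (D : Set (calB ρ₂)))
    (hinv : ∀ t : ℝ≥0, ∀ f ∈ D, ∃ g : calB ρ₂, P1 t (M f) = M g)
    (C : ℝ) (hC : 1 ≤ C)
    (hgrow : ∀ (t : ℝ≥0) (f : calB ρ₂), (∀ y, |valOf f y| ≤ ρ₂ y) →
      ∀ x, |valOf (P1 t (M f)) x| ≤ C * ρ₂ (q x)) :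
    ∃ P2 : ℝ≥0 → (calB ρ₂) →L[ℝ] (calB ρ₂),
      IsGenFellerSemigroup ρ₂ P2 ∧
      ∀ (t : ℝ≥0) (f : calB ρ₂), P1 t (M f) = M (P2 t f) :=
  invariant_subspace_genFeller_general hρ₁ hρ₂ q hqs hρq P1 hP1 M hM D hD hinv C hC hgrow
end
end

section
/- Let (X, ρ₁) be a weighted space, let q : X → q(X) be a continuous surjection from (X, ρ₁) onto a weighted space (q(X), ρ₂) with ρ₂(q(x)) = ρ₁(x) for all x ∈ X, and let P⁽¹⁾ be a generalized Feller semigroup on 𝓑^{ρ₁}(X). Let D be a dense subspace of 𝓑^{ρ₂}(q(X)) such that for every f ∈ D and every t ≥ 0 there exists g ∈ 𝓑^{ρ₂}(q(X)) with P⁽¹⁾_t(f ∘ q) = g ∘ q. Then there exists a generalized Feller semigroup P⁽²⁾ on 𝓑^{ρ₂}(q(X)) such that P⁽¹⁾_t(f ∘ q) = (P⁽²⁾_t f) ∘ q for all f ∈ 𝓑^{ρ₂}(q(X)) and t ≥ 0; in particular, the range of the bounded linear operator M : 𝓑^{ρ₂}(q(X)) → 𝓑^{ρ₁}(X), M f :=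 f ∘ q, is closed. -/
/-!
Since `ρ₂ ∘ q = ρ₁` and `q` is onto, `M` is an isometry, so its range is closed. Each `P⁽¹⁾_t`
maps `M(D)` into the range of `M`, hence by density and continuity the whole range, and
`P⁽²⁾_t` is `P⁽¹⁾_t` restricted to that range and transported back along `M`. Injectivity of `M`
carries the semigroup law, pointwise continuity and positivity over from `P⁽¹⁾`, and
`‖P⁽²⁾_t‖ ≤ ‖P⁽¹⁾_t‖` gives the local norm bound.
-/

open scoped ENNReal NNReal
open Filter Set MeasureTheory TopologicalSpace

noncomputable section

variable {X : Type*} [TopologicalSpace X] {ρ : X → ℝ}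

universe u

namespace LinearIsometry

variable {𝕜 E F : Type*} [NontriviallyNormedField 𝕜] [NormedAddCommGroup E] [NormedSpace 𝕜 E]
  [SeminormedAddCommGroup F] [NormedSpace 𝕜 F]

def restrictInvariant (M : E →ₗᵢ[𝕜] F) (T : F →L[𝕜] F)
    (hT : ∀ f, T (M f) ∈ LinearMap.range M.toLinearMap) : E →L[𝕜] E :=
  (M.equivRange.symm.toContinuousLinearEquiv : _ →L[𝕜] E) ∘L
    (T ∘L M.toContinuousLinearMap).codRestrict _ hT

variable (M : E →ₗᵢ[𝕜] F) (T : F →L[𝕜] F) (hT : ∀ f, T (M f) ∈ LinearMap.range M.toLinearMap)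

@[simp]
lemma apply_restrictInvariant (f : E) : M (M.restrictInvariant T hT f) = T (M f) := by
  have := M.equivRange_apply_coe (M.equivRange.symm ⟨T (M f), hT f⟩)
  rw [LinearIsometryEquiv.apply_symm_apply] at this
  exact this.symm

lemma norm_restrictInvariant_le : ‖M.restrictInvariant T hT‖ ≤ ‖T‖ :=
  ContinuousLinearMap.opNorm_le_bound _ (norm_nonneg T) fun f => by
    rw [← M.norm_map, apply_restrictInvariant, ← M.norm_map f]
    exact T.le_opNorm (M f)

end LinearIsometry

lemma lp.norm_eq_of_comp_surjective {α β : Type*} {q : α → β} (hq : Function.Surjective q)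
    {g : BddFun α} {f : BddFun β} (h : ∀ x, g x = f (q x)) : ‖g‖ = ‖f‖ := by
  rw [lp.norm_eq_ciSup, lp.norm_eq_ciSup, ← hq.iSup_comp]
  simp only [h]

instance calB.completeSpace : CompleteSpace (calB ρ) :=
  Submodule.topologicalClosure.completeSpace (preCalB ρ)

lemma calB.ext_valOf (hρ : ∀ x, 0 < ρ x) {f g : calB ρ}
    (h : ∀ x, valOf f x = valOf g x) : f = g :=
  Subtype.ext <| lp.ext <| funext fun x => mul_left_cancel₀ (hρ x).ne' (h x)

section Pullback

variable {Y : Type*} [TopologicalSpace Y] {ρ₁ : X → ℝ} {ρ₂ : Y → ℝ} {q : X → Y}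
  {M : calB ρ₂ →ₗ[ℝ] calB ρ₁}

lemma injective_of_valOf_comp (hρ₂ : ∀ y, 0 < ρ₂ y) (hq : Function.Surjective q)
    (hM : ∀ f x, valOf (M f) x = valOf f (q x)) : Function.Injective M := by
  intro f g hfg
  refine calB.ext_valOf hρ₂ fun y => ?_
  obtain ⟨x, rfl⟩ := hq y
  rw [← hM, ← hM, hfg]

lemma scaledApp_eq_of_valOf_comp (hρ₂ : ∀ y, 0 < ρ₂ y) (hρq : ∀ x, ρ₂ (q x) = ρ₁ x)
    (hM : ∀ f x, valOf (M f) x = valOf f (q x)) (f : calB ρ₂) (x : X) :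
    scaledApp (M f) x = scaledApp f (q x) := by
  have h := hM f x
  rw [valOf, valOf, hρq] at h
  exact mul_left_cancel₀ (hρq x ▸ (hρ₂ (q x)).ne') h

lemma norm_map_of_valOf_comp (hρ₂ : ∀ y, 0 < ρ₂ y) (hρq : ∀ x, ρ₂ (q x) = ρ₁ x)
    (hq : Function.Surjective q) (hM : ∀ f x, valOf (M f) x = valOf f (q x)) (f : calB ρ₂) :
    ‖M f‖ = ‖f‖ :=
  lp.norm_eq_of_comp_surjective hq (scaledApp_eq_of_valOf_comp hρ₂ hρq hM f)

lemma IsGenFellerSemigroup.of_intertwining_s4 {P₁ : ℝ≥0 → calB ρ₁ →L[ℝ] calB ρ₁}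
    {P₂ : ℝ≥0 → calB ρ₂ →L[ℝ] calB ρ₂} (hP₁ : IsGenFellerSemigroup ρ₁ P₁)
    (hρ₂ : ∀ y, 0 < ρ₂ y) (hq : Function.Surjective q)
    (hM : ∀ f x, valOf (M f) x = valOf f (q x))
    (hP : ∀ t f, P₁ t (M f) = M (P₂ t f)) (hnorm : ∀ t, ‖P₂ t‖ ≤ ‖P₁ t‖) :
    IsGenFellerSemigroup ρ₂ P₂ := by
  have hMinj := injective_of_valOf_comp hρ₂ hq hM
  constructor
  · ext1 f
    apply hMinj
    rw [← hP, hP₁.map_zero]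
    rfl
  · intro s t
    ext1 f
    apply hMinj
    rw [← hP, hP₁.semigroup, ContinuousLinearMap.comp_apply, ContinuousLinearMap.comp_apply,
      hP t, hP s]
  · intro f y
    obtain ⟨x, rfl⟩ := hq y
    simpa only [hM, hP] using hP₁.tendsto_apply (M f) x
  · obtain ⟨C, ε, hε, hC⟩ := hP₁.norm_bound
    exact ⟨C, ε, hε, fun t ht => (hnorm t).trans (hC t ht)⟩
  · intro t f hf y
    obtain ⟨x, rfl⟩ := hq y
    rw [← hM, ← hP]
    exact hP₁.pos t (M f) (fun x' => (hM f x').symm ▸ hf (q x')) x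

end Pullback

theorem invariant_subspace_genFeller_eqWeight_general
    {X : Type u} [TopologicalSpace X]
    {X₂ : Type u} [TopologicalSpace X₂]
    {ρ₁ : X → ℝ}
    {ρ₂ : X₂ → ℝ} (hρ₂ : AdmissibleWeight ρ₂)
    (q : X → X₂) (hqs : Function.Surjective q)
    (hρq : ∀ x, ρ₂ (q x) = ρ₁ x)
    (P1 : ℝ≥0 → (calB ρ₁) →L[ℝ] (calB ρ₁)) (hP1 : IsGenFellerSemigroup ρ₁ P1)
    (M : (calB ρ₂) →ₗ[ℝ] (calB ρ₁))
    (hM : ∀ (f : calB ρ₂) (x : X), valOf (M f) x = valOf f (q x))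
    (D : Submodule ℝ (calB ρ₂)) (hD : Dense (D : Set (calB ρ₂)))
    (hinv : ∀ t : ℝ≥0, ∀ f ∈ D, ∃ g : calB ρ₂, P1 t (M f) = M g) :
    ∃ P2 : ℝ≥0 → (calB ρ₂) →L[ℝ] (calB ρ₂),
      IsGenFellerSemigroup ρ₂ P2 ∧
      (∀ (t : ℝ≥0) (f : calB ρ₂), P1 t (M f) = M (P2 t f)) ∧
      IsClosed (Set.range M : Set (calB ρ₁)) := by
  let Mᵢ : calB ρ₂ →ₗᵢ[ℝ] calB ρ₁ := ⟨M, norm_map_of_valOf_comp hρ₂.pos hρq hqs hM⟩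
  have hclosed : IsClosed (Set.range Mᵢ) := Mᵢ.isometry.isClosedEmbedding.isClosed_range
  have hinv' : ∀ t f, P1 t (Mᵢ f) ∈ LinearMap.range Mᵢ.toLinearMap := fun t f =>
    hD.induction (P := fun f => P1 t (Mᵢ f) ∈ Set.range Mᵢ)
      (fun f hf => (hinv t f hf).elim fun g hg => ⟨g, hg.symm⟩)
      (hclosed.preimage ((P1 t).continuous.comp Mᵢ.continuous)) f
  let P2 t := Mᵢ.restrictInvariant (P1 t) (hinv' t)
  have hP : ∀ t f, P1 t (M f) = M (P2 t f) := fun t f =>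
    (Mᵢ.apply_restrictInvariant (P1 t) (hinv' t) f).symm
  exact ⟨P2, hP1.of_intertwining_s4 hρ₂.pos hqs hM hP
    (fun t => Mᵢ.norm_restrictInvariant_le _ _), hP, hclosed⟩

/-- Variant of the invariant subspace theorem in the case `ρ₂ ∘ q = ρ₁`: the growth
assumption is not needed, and additionally the range of the pullback operator
`M : f ↦ f ∘ q` is closed. -/
theorem invariant_subspace_genFeller_eqWeight
    {X : Type u} [TopologicalSpace X] [T2Space X] [CompletelyRegularSpace X]
    {X₂ : Type u} [TopologicalSpace X₂] [T2Space X₂] [CompletelyRegularSpace X₂]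
    {ρ₁ : X → ℝ} (hρ₁ : AdmissibleWeight ρ₁)
    {ρ₂ : X₂ → ℝ} (hρ₂ : AdmissibleWeight ρ₂)
    (q : X → X₂) (hqc : Continuous q) (hqs : Function.Surjective q)
    (hρq : ∀ x, ρ₂ (q x) = ρ₁ x)
    (P1 : ℝ≥0 → (calB ρ₁) →L[ℝ] (calB ρ₁)) (hP1 : IsGenFellerSemigroup ρ₁ P1)
    (M : (calB ρ₂) →ₗ[ℝ] (calB ρ₁))
    (hM : ∀ (f : calB ρ₂) (x : X), valOf (M f) x = valOf f (q x))
    (D : Submodule ℝ (calB ρ₂)) (hD : Dense (D : Set (calB ρ₂)))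
    (hinv : ∀ t : ℝ≥0, ∀ f ∈ D, ∃ g : calB ρ₂, P1 t (M f) = M g) :
    ∃ P2 : ℝ≥0 → (calB ρ₂) →L[ℝ] (calB ρ₂),
      IsGenFellerSemigroup ρ₂ P2 ∧
      (∀ (t : ℝ≥0) (f : calB ρ₂), P1 t (M f) = M (P2 t f)) ∧
      IsClosed (Set.range M : Set (calB ρ₁)) :=
  invariant_subspace_genFeller_eqWeight_general hρ₂ q hqs hρq P1 hP1 M hM D hD hinv
end
end

section
/- Let Y be a separable real Banach space, let 𝓔 ⊆ Y* be a closed subset of the dual space equipped with the weak-* topology, and let ρ : 𝓔 → (0,∞) be an admissible weight function, so that (𝓔, ρ) is a weighted space. Let Cyl denote the set of bounded smooth cylinder functions on 𝓔, i.e. functions of the form λ ↦ g(⟨λ, y₁⟩, …, ⟨λ, y_N⟩) with N ∈ ℕ, g ∈ C_b^∞(ℝ^N) and y₁, …, y_N ∈ Y. Then the closure of Cyl in B^ρ(𝓔) coincides with 𝓑^ρ(𝓔); moreover, a function f ∈ B^ρ(𝓔) belongs to 𝓑^ρ(𝓔) if and only if the restriction of f to K_R = {λ ∈ 𝓔 :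 ρ(λ) ≤ R} is weak-*-continuous for every R > 0 and lim_{R→∞} sup_{λ ∈ 𝓔∖K_R} ρ(λ)^{-1}|f(λ)| = 0. -/
open scoped ENNReal NNReal
open Filter Set MeasureTheory TopologicalSpace

noncomputable section

variable {X : Type*} [TopologicalSpace X] {ρ : X → ℝ}

universe u

/-- A bounded smooth cylinder function on a subset `𝓔` of a weak-* dual. -/
def IsCylinderFun {Y : Type u} [NormedAddCommGroup Y] [NormedSpace ℝ Y]
    (𝓔 : Set (WeakDual ℝ Y)) (f : ↥𝓔 → ℝ) : Prop :=
  ∃ (N : ℕ) (y : Fin N → Y) (g : (Fin N → ℝ) → ℝ),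
    ContDiff ℝ (⊤ : ℕ∞) g ∧ (∀ k : ℕ, ∃ C : ℝ, ∀ v, ‖iteratedFDeriv ℝ k g v‖ ≤ C) ∧
    ∀ lam : ↥𝓔, f lam = g fun i => (lam : WeakDual ℝ Y) (y i)


/-- Bounded-analytic predicate: the smoothness/boundedness condition on cylinder profiles. -/
def BS {E F : Type*} [NormedAddCommGroup E] [NormedSpace ℝ E] [NormedAddCommGroup F]
    [NormedSpace ℝ F] (g : E → F) : Prop :=
  ContDiff ℝ (⊤ : ℕ∞) g ∧ ∀ k : ℕ, ∃ C : ℝ, ∀ v, ‖iteratedFDeriv ℝ k g v‖ ≤ C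

variable {E F G : Type*} [NormedAddCommGroup E] [NormedSpace ℝ E] [NormedAddCommGroup F]
    [NormedSpace ℝ F] [NormedAddCommGroup G] [NormedSpace ℝ G]

theorem BS.bound_le {g : E → F} (h : BS g) (n : ℕ) :
    ∃ C : ℝ, 0 ≤ C ∧ ∀ i ≤ n, ∀ v, ‖iteratedFDeriv ℝ i g v‖ ≤ C := by
  induction n with
  | zero =>
    obtain ⟨C, hC⟩ := h.2 0
    exact ⟨max C 0, le_max_right _ _, fun i hi v => by
      interval_cases i
      exact (hC v).trans (le_max_left _ _)⟩
  | succ n ih =>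
    obtain ⟨C, hC0, hC⟩ := ih
    obtain ⟨D, hD⟩ := h.2 (n + 1)
    refine ⟨max C D, hC0.trans (le_max_left _ _), fun i hi v => ?_⟩
    rcases Nat.lt_or_ge i (n + 1) with hlt | hge
    · exact (hC i (Nat.lt_succ_iff.mp hlt) v).trans (le_max_left _ _)
    · have : i = n + 1 := le_antisymm hi hge
      subst this
      exact (hD v).trans (le_max_right _ _)

theorem BS.const (c : F) : BS (fun _ : E => c) := by
  refine ⟨contDiff_const, fun k => ?_⟩
  rcases k with _ | k
  · exact ⟨‖c‖, fun v => by rw [norm_iteratedFDeriv_zero]⟩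
  · exact ⟨0, fun v => by rw [iteratedFDeriv_const_of_ne (Nat.succ_ne_zero k)]; simp⟩

theorem BS.add {f g : E → F} (hf : BS f) (hg : BS g) : BS (fun x => f x + g x) := by
  refine ⟨hf.1.add hg.1, fun k => ?_⟩
  obtain ⟨C, hC⟩ := hf.2 k
  obtain ⟨D, hD⟩ := hg.2 k
  refine ⟨C + D, fun v => ?_⟩
  have := iteratedFDeriv_add_apply (f := f) (g := g) (i := k)
    (hf.1.of_le (by exact_mod_cast le_top)).contDiffAt (hg.1.of_le (by exact_mod_cast le_top)).contDiffAt (x := v)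
  calc ‖iteratedFDeriv ℝ k (fun x => f x + g x) v‖
      = ‖iteratedFDeriv ℝ k f v + iteratedFDeriv ℝ k g v‖ := by
        rw [← this]; rfl
    _ ≤ ‖iteratedFDeriv ℝ k f v‖ + ‖iteratedFDeriv ℝ k g v‖ := norm_add_le _ _
    _ ≤ C + D := add_le_add (hC v) (hD v)

theorem BS.mul {f g : E → ℝ} (hf : BS f) (hg : BS g) : BS (fun x => f x * g x) := by
  refine ⟨hf.1.mul hg.1, fun k => ?_⟩
  obtain ⟨C, hC0, hC⟩ := hf.bound_le k
  obtain ⟨D, hD0, hD⟩ := hg.bound_le k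
  refine ⟨∑ i ∈ Finset.range (k + 1), (k.choose i : ℝ) * C * D, fun v => ?_⟩
  refine (norm_iteratedFDeriv_mul_le (hf.1) (hg.1) v ((by exact_mod_cast le_top))).trans ?_
  refine Finset.sum_le_sum fun i hi => ?_
  have hik : i ≤ k := Nat.lt_succ_iff.mp (Finset.mem_range.mp hi)
  have h1 : ‖iteratedFDeriv ℝ i f v‖ ≤ C := hC i hik v
  have h2 : ‖iteratedFDeriv ℝ (k - i) g v‖ ≤ D := hD (k - i) (Nat.sub_le _ _) v
  have hcnn : (0:ℝ) ≤ (k.choose i : ℝ) := Nat.cast_nonneg _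
  calc (k.choose i : ℝ) * ‖iteratedFDeriv ℝ i f v‖ * ‖iteratedFDeriv ℝ (k - i) g v‖
      ≤ (k.choose i : ℝ) * C * ‖iteratedFDeriv ℝ (k - i) g v‖ := by
        apply mul_le_mul_of_nonneg_right _ (norm_nonneg _)
        exact mul_le_mul_of_nonneg_left h1 hcnn
    _ ≤ (k.choose i : ℝ) * C * D :=
        mul_le_mul_of_nonneg_left h2 (mul_nonneg hcnn hC0)

theorem BS.comp {g : F → G} {f : E → F} (hg : BS g) (hf : BS f) : BS (g ∘ f) := by
  refine ⟨hg.1.comp hf.1, fun n => ?_⟩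
  obtain ⟨C, hC0, hC⟩ := hg.bound_le n
  obtain ⟨D₀, hD₀0, hD₀⟩ := hf.bound_le n
  have hD1 : (1:ℝ) ≤ max D₀ 1 := le_max_right _ _
  refine ⟨(Nat.factorial n : ℝ) * C * (max D₀ 1) ^ n, fun v => ?_⟩
  refine norm_iteratedFDeriv_comp_le hg.1 hf.1 (by exact_mod_cast le_top) v
    (fun i hi => hC i hi _) (fun i h1i hin => ?_)
  calc ‖iteratedFDeriv ℝ i f v‖ ≤ D₀ := hD₀ i hin v
    _ ≤ max D₀ 1 := le_max_left _ _
    _ ≤ (max D₀ 1) ^ i := le_self_pow₀ hD1 (by omega)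

theorem BS.compCLM {g : F → G} (hg : BS g) (L : E →L[ℝ] F) : BS (g ∘ L) := by
  refine ⟨hg.1.comp L.contDiff, fun k => ?_⟩
  obtain ⟨C, hC0, hC⟩ := hg.bound_le k
  refine ⟨C * ‖L‖ ^ k, fun v => ?_⟩
  rw [L.iteratedFDeriv_comp_right hg.1 v ((by exact_mod_cast le_top))]
  refine (ContinuousMultilinearMap.norm_compContinuousLinearMap_le _ _).trans ?_
  have : ∏ _i : Fin k, ‖L‖ = ‖L‖ ^ k := by
    simp [Finset.prod_const]
  rw [this]
  exact mul_le_mul_of_nonneg_right (hC k le_rfl (L v)) (pow_nonneg (norm_nonneg _) _)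

/-- bound for iterated derivatives of `t ↦ sin (b*t+c)` -/
theorem iteratedDeriv_sin_affine_bound (b : ℝ) (k : ℕ) :
    ∀ (c x : ℝ), |iteratedDeriv k (fun t => Real.sin (b * t + c)) x| ≤ |b| ^ k := by
  induction k with
  | zero =>
    intro c x
    simpa [iteratedDeriv_zero] using Real.abs_sin_le_one (b * x + c)
  | succ k ih =>
    intro c x
    rw [iteratedDeriv_succ']
    have hderiv : deriv (fun t => Real.sin (b * t + c))
        = fun t => b • Real.sin (b * t + (c + Real.pi / 2)) := by
      funext t
      have h1 : HasDerivAt (fun t : ℝ => b * t + c) b t := by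
        simpa using ((hasDerivAt_id t).const_mul b).add_const c
      have h2 : HasDerivAt (fun t => Real.sin (b * t + c)) (Real.cos (b * t + c) * b) t :=
        (Real.hasDerivAt_sin _).comp t h1
      rw [h2.deriv, smul_eq_mul, ← Real.sin_add_pi_div_two, add_assoc, mul_comm]
    rw [hderiv]
    have hsm : ∀ x, |iteratedDeriv k (fun t => b • Real.sin (b * t + (c + Real.pi / 2))) x|
        ≤ |b| * |b| ^ k := by
      intro x
      have hcd : ContDiff ℝ (k : ℕ) (fun t => Real.sin (b * t + (c + Real.pi / 2))) := by
        have : ContDiff ℝ (⊤ : WithTop ℕ∞) (fun t : ℝ => Real.sin (b * t + (c + Real.pi / 2))) :=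
          Real.contDiff_sin.comp ((contDiff_const.mul contDiff_id).add contDiff_const)
        exact this.of_le le_top
      have heq : (fun t => b • Real.sin (b * t + (c + Real.pi / 2)))
          = b • (fun t => Real.sin (b * t + (c + Real.pi / 2))) := rfl
      rw [heq, ← Real.norm_eq_abs, ← norm_iteratedFDeriv_eq_norm_iteratedDeriv,
        iteratedFDeriv_const_smul_apply hcd.contDiffAt,
        norm_smul b (iteratedFDeriv ℝ k (fun t => Real.sin (b * t + (c + Real.pi / 2))) x),
        norm_iteratedFDeriv_eq_norm_iteratedDeriv]
      rw [Real.norm_eq_abs, Real.norm_eq_abs]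
      exact mul_le_mul_of_nonneg_left (ih _ x) (abs_nonneg b)
    rw [pow_succ, mul_comm (|b| ^ k) |b|] at *
    exact hsm x

theorem BS.sin_affine (a b c : ℝ) : BS (fun t : ℝ => a * Real.sin (b * t + c)) := by
  constructor
  · exact contDiff_const.mul
      (Real.contDiff_sin.comp ((contDiff_const.mul contDiff_id).add contDiff_const))
  · intro k
    refine ⟨|a| * |b| ^ k, fun v => ?_⟩
    have hcd : ContDiff ℝ (k : ℕ) (fun t : ℝ => Real.sin (b * t + c)) := by
      have : ContDiff ℝ (⊤ : WithTop ℕ∞) (fun t : ℝ => Real.sin (b * t + c)) :=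
        Real.contDiff_sin.comp ((contDiff_const.mul contDiff_id).add contDiff_const)
      exact this.of_le le_top
    have heq : (fun t : ℝ => a * Real.sin (b * t + c))
        = a • (fun t : ℝ => Real.sin (b * t + c)) := rfl
    rw [heq, iteratedFDeriv_const_smul_apply hcd.contDiffAt,
      norm_smul a (iteratedFDeriv ℝ k (fun t : ℝ => Real.sin (b * t + c)) v),
      norm_iteratedFDeriv_eq_norm_iteratedDeriv, Real.norm_eq_abs, Real.norm_eq_abs]
    exact mul_le_mul_of_nonneg_left (iteratedDeriv_sin_affine_bound b k c v) (abs_nonneg a)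

/-- `|sin u - u| ≤ |u|^3/4` for `|u| ≤ 1`. -/
theorem abs_sin_sub_le (u : ℝ) (hu : |u| ≤ 1) : |Real.sin u - u| ≤ |u| ^ 3 / 4 := by
  rcases lt_trichotomy u 0 with hneg | hzero | hpos
  · have h1 : 0 < -u := by linarith
    have h2 : -u ≤ 1 := by
      have := (abs_le.mp hu).1; linarith
    have hlt : Real.sin (-u) < -u := Real.sin_lt h1
    have hgt : -u - (-u) ^ 3 / 4 < Real.sin (-u) := by
      have := Real.sin_gt_sub_cube h1; have : 0 < (-u) ^ 3 := by positivity
      linarith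
    rw [Real.sin_neg] at hlt hgt
    rw [abs_of_neg hneg, abs_le]
    have hcube : 0 < (-u) ^ 3 := by positivity
    constructor <;> nlinarith
  · simp [hzero]
  · have h2 : u ≤ 1 := (abs_le.mp hu).2
    have hlt : Real.sin u < u := Real.sin_lt hpos
    have hgt : u - u ^ 3 / 4 < Real.sin u := by
      have := Real.sin_gt_sub_cube hpos; have : 0 < u ^ 3 := by positivity
      linarith
    rw [abs_of_pos hpos, abs_le]
    have hcube : 0 < u ^ 3 := by positivity
    constructor <;> nlinarith

theorem exists_chi_aux (M η A : ℝ) (hM : 0 < M) (hη : 0 < η) (hA1 : 1 ≤ A) (hMA : M ≤ A)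
    (hcube : M ^ 3 / (4 * η) ≤ A) :
    ∀ t, |t| ≤ M → |A * Real.sin (A⁻¹ * t + 0) - t| ≤ η := by
  intro t ht
  have hA0 : (0:ℝ) < A := lt_of_lt_of_le one_pos hA1
  have hu : |A⁻¹ * t + 0| ≤ 1 := by
    rw [add_zero, abs_mul, abs_of_pos (inv_pos.mpr hA0)]
    rw [inv_mul_le_iff₀ hA0, mul_one]
    exact ht.trans hMA
  have key := abs_sin_sub_le _ hu
  have heq : A * Real.sin (A⁻¹ * t + 0) - t = A * (Real.sin (A⁻¹ * t + 0) - (A⁻¹ * t + 0)) := by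
    rw [add_zero, mul_sub]
    have : A * (A⁻¹ * t) = t := by field_simp
    rw [this]
  rw [heq, abs_mul, abs_of_pos hA0]
  have h2 : |A⁻¹ * t + 0| ^ 3 = |t| ^ 3 / A ^ 3 := by
    rw [add_zero, abs_mul, abs_of_pos (inv_pos.mpr hA0), mul_pow]
    field_simp
  have h3 : A * (|A⁻¹ * t + 0| ^ 3 / 4) = |t| ^ 3 / (4 * A ^ 2) := by
    rw [h2]; field_simp
  have hAA : A ≤ A ^ 2 := by nlinarith
  calc A * |Real.sin (A⁻¹ * t + 0) - (A⁻¹ * t + 0)| ≤ A * (|A⁻¹ * t + 0| ^ 3 / 4) :=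
        mul_le_mul_of_nonneg_left key hA0.le
    _ = |t| ^ 3 / (4 * A ^ 2) := h3
    _ ≤ M ^ 3 / (4 * A ^ 2) := by
        have h4 : |t| ^ 3 ≤ M ^ 3 := pow_le_pow_left₀ (abs_nonneg t) ht 3
        gcongr
    _ ≤ η := by
        rw [div_le_iff₀ (by positivity)]
        have hA2 : M ^ 3 / (4 * η) ≤ A ^ 2 := hcube.trans hAA
        rw [div_le_iff₀ (by positivity)] at hA2
        nlinarith

/-- An analytic, bounded "approximate truncation": bounded by `A`, close to the identity
on `[-M, M]`. -/
theorem exists_chi (M η : ℝ) (hM : 0 < M) (hη : 0 < η) :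
    ∃ (χ : ℝ → ℝ) (A : ℝ), BS χ ∧ 0 < A ∧ (∀ t, |χ t| ≤ A) ∧
      ∀ t, |t| ≤ M → |χ t - t| ≤ η := by
  obtain ⟨A, hA1, hMA, hcube⟩ : ∃ A : ℝ, 1 ≤ A ∧ M ≤ A ∧ M ^ 3 / (4 * η) ≤ A := by
    refine ⟨max 1 (max M (M ^ 3 / (4 * η))), le_max_left _ _, ?_, ?_⟩
    · exact (le_max_left _ _).trans (le_max_right _ _)
    · exact (le_max_right _ _).trans (le_max_right _ _)
  have hA0 : (0:ℝ) < A := lt_of_lt_of_le one_pos hA1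
  refine ⟨fun t => A * Real.sin (A⁻¹ * t + 0), A, BS.sin_affine A A⁻¹ 0, hA0, fun t => ?_,
    exists_chi_aux M η A hM hη hA1 hMA hcube⟩
  calc |A * Real.sin (A⁻¹ * t + 0)| = A * |Real.sin (A⁻¹ * t + 0)| := by
        rw [abs_mul, abs_of_pos hA0]
    _ ≤ A * 1 := mul_le_mul_of_nonneg_left (Real.abs_sin_le_one _) hA0.le
    _ = A := mul_one A

section CylLemmas

variable {Y : Type u} [NormedAddCommGroup Y] [NormedSpace ℝ Y] {𝓔 : Set (WeakDual ℝ Y)}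

theorem IsCylinderFun.const' (c : ℝ) : IsCylinderFun 𝓔 (fun _ => c) :=
  ⟨0, Fin.elim0, fun _ => c, contDiff_const, (BS.const (E := Fin 0 → ℝ) c).2, fun _ => rfl⟩

theorem IsCylinderFun.add' {f₁ f₂ : ↥𝓔 → ℝ} (h₁ : IsCylinderFun 𝓔 f₁)
    (h₂ : IsCylinderFun 𝓔 f₂) : IsCylinderFun 𝓔 (fun lam => f₁ lam + f₂ lam) := by
  obtain ⟨N₁, y₁, g₁, hg₁c, hg₁b, he₁⟩ := h₁
  obtain ⟨N₂, y₂, g₂, hg₂c, hg₂b, he₂⟩ := h₂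
  set L₁ : (Fin (N₁ + N₂) → ℝ) →L[ℝ] (Fin N₁ → ℝ) :=
    ContinuousLinearMap.pi fun i => ContinuousLinearMap.proj (Fin.castAdd N₂ i) with hL₁
  set L₂ : (Fin (N₁ + N₂) → ℝ) →L[ℝ] (Fin N₂ → ℝ) :=
    ContinuousLinearMap.pi fun i => ContinuousLinearMap.proj (Fin.natAdd N₁ i) with hL₂
  have hBS : BS (fun v => (g₁ ∘ L₁) v + (g₂ ∘ L₂) v) :=
    BS.add (BS.compCLM (show BS g₁ from ⟨hg₁c, hg₁b⟩) L₁) (BS.compCLM (show BS g₂ from ⟨hg₂c, hg₂b⟩) L₂)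
  refine ⟨N₁ + N₂, Fin.append y₁ y₂, _, hBS.1, hBS.2, fun lam => ?_⟩
  have hv₁ : L₁ (fun i => (lam : WeakDual ℝ Y) (Fin.append y₁ y₂ i))
      = fun i => (lam : WeakDual ℝ Y) (y₁ i) := by
    funext i
    simp [hL₁, Fin.append_left]
  have hv₂ : L₂ (fun i => (lam : WeakDual ℝ Y) (Fin.append y₁ y₂ i))
      = fun i => (lam : WeakDual ℝ Y) (y₂ i) := by
    funext i
    simp [hL₂, Fin.append_right]
  show f₁ lam + f₂ lam = (g₁ ∘ L₁) _ + (g₂ ∘ L₂) _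
  simp only [Function.comp_apply, hv₁, hv₂, he₁ lam, he₂ lam]

theorem IsCylinderFun.mul' {f₁ f₂ : ↥𝓔 → ℝ} (h₁ : IsCylinderFun 𝓔 f₁)
    (h₂ : IsCylinderFun 𝓔 f₂) : IsCylinderFun 𝓔 (fun lam => f₁ lam * f₂ lam) := by
  obtain ⟨N₁, y₁, g₁, hg₁c, hg₁b, he₁⟩ := h₁
  obtain ⟨N₂, y₂, g₂, hg₂c, hg₂b, he₂⟩ := h₂
  set L₁ : (Fin (N₁ + N₂) → ℝ) →L[ℝ] (Fin N₁ → ℝ) :=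
    ContinuousLinearMap.pi fun i => ContinuousLinearMap.proj (Fin.castAdd N₂ i) with hL₁
  set L₂ : (Fin (N₁ + N₂) → ℝ) →L[ℝ] (Fin N₂ → ℝ) :=
    ContinuousLinearMap.pi fun i => ContinuousLinearMap.proj (Fin.natAdd N₁ i) with hL₂
  have hBS : BS (fun v => (g₁ ∘ L₁) v * (g₂ ∘ L₂) v) :=
    BS.mul (BS.compCLM (show BS g₁ from ⟨hg₁c, hg₁b⟩) L₁) (BS.compCLM (show BS g₂ from ⟨hg₂c, hg₂b⟩) L₂)
  refine ⟨N₁ + N₂, Fin.append y₁ y₂, _, hBS.1, hBS.2, fun lam => ?_⟩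
  have hv₁ : L₁ (fun i => (lam : WeakDual ℝ Y) (Fin.append y₁ y₂ i))
      = fun i => (lam : WeakDual ℝ Y) (y₁ i) := by
    funext i
    simp [hL₁, Fin.append_left]
  have hv₂ : L₂ (fun i => (lam : WeakDual ℝ Y) (Fin.append y₁ y₂ i))
      = fun i => (lam : WeakDual ℝ Y) (y₂ i) := by
    funext i
    simp [hL₂, Fin.append_right]
  show f₁ lam * f₂ lam = (g₁ ∘ L₁) _ * (g₂ ∘ L₂) _
  simp only [Function.comp_apply, hv₁, hv₂, he₁ lam, he₂ lam]

theorem IsCylinderFun.compBS {f : ↥𝓔 → ℝ} {χ : ℝ → ℝ} (hχ : BS χ)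
    (h : IsCylinderFun 𝓔 f) : IsCylinderFun 𝓔 (fun lam => χ (f lam)) := by
  obtain ⟨N, y, g, hgc, hgb, he⟩ := h
  have hBS : BS (χ ∘ g) := hχ.comp (show BS g from ⟨hgc, hgb⟩)
  exact ⟨N, y, χ ∘ g, hBS.1, hBS.2, fun lam => by
    simp only [Function.comp_apply, he lam]⟩

theorem IsCylinderFun.continuous' {f : ↥𝓔 → ℝ} (h : IsCylinderFun 𝓔 f) : Continuous f := by
  obtain ⟨N, y, g, hgc, hgb, he⟩ := h
  have : f = fun lam : ↥𝓔 => g fun i => (lam : WeakDual ℝ Y) (y i) := funext he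
  rw [this]
  exact hgc.continuous.comp
    (continuous_pi fun i => (WeakDual.eval_continuous (y i)).comp continuous_subtype_val)

theorem IsCylinderFun.bounded' {f : ↥𝓔 → ℝ} (h : IsCylinderFun 𝓔 f) :
    ∃ C, ∀ lam, |f lam| ≤ C := by
  obtain ⟨N, y, g, hgc, hgb, he⟩ := h
  obtain ⟨C, hC⟩ := hgb 0
  refine ⟨C, fun lam => ?_⟩
  calc |f lam| = ‖iteratedFDeriv ℝ 0 g (fun i => (lam : WeakDual ℝ Y) (y i))‖ := by
        rw [norm_iteratedFDeriv_zero, Real.norm_eq_abs, he lam]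
    _ ≤ C := hC _

theorem isCylinderFun_sin_eval (y₀ : Y) (a b c : ℝ) :
    IsCylinderFun 𝓔 (fun lam => a * Real.sin (b * (lam : WeakDual ℝ Y) y₀ + c)) := by
  have hBS : BS ((fun t : ℝ => a * Real.sin (b * t + c)) ∘
      (ContinuousLinearMap.proj (R := ℝ) (φ := fun _ : Fin 1 => ℝ) 0)) :=
    (BS.sin_affine a b c).compCLM _
  exact ⟨1, fun _ => y₀, _, hBS.1, hBS.2, fun lam => rfl⟩

end CylLemmas


section Core

theorem AdmissibleWeight.exists_pos_forall_le {X : Type*} [TopologicalSpace X] [T2Space X]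
    {ρ : X → ℝ} (hρ : AdmissibleWeight ρ) : ∃ δ : ℝ, 0 < δ ∧ ∀ x, δ ≤ ρ x := by
  by_contra hcon
  push_neg at hcon
  have hne : ∀ n : ℕ, ({x | ρ x ≤ 1 / ((n : ℝ) + 1)} : Set X).Nonempty := by
    intro n
    obtain ⟨x, hx⟩ := hcon (1 / ((n : ℝ) + 1)) (by positivity)
    exact ⟨x, hx.le⟩
  have hcpt : ∀ n : ℕ, IsCompact ({x | ρ x ≤ 1 / ((n : ℝ) + 1)} : Set X) := fun n =>
    hρ.isCompact_sublevel _ (by positivity)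
  have hdec : ∀ n : ℕ, ({x | ρ x ≤ 1 / ((n : ℝ) + 1 + 1)} : Set X)
      ⊆ {x | ρ x ≤ 1 / ((n : ℝ) + 1)} := by
    intro n x hx
    have h1 : (1 : ℝ) / ((n : ℝ) + 1 + 1) ≤ 1 / ((n : ℝ) + 1) := by
      apply one_div_le_one_div_of_le (by positivity)
      linarith
    exact le_trans hx h1
  obtain ⟨x, hx⟩ := IsCompact.nonempty_iInter_of_sequence_nonempty_isCompact_isClosed
    (fun n => {x | ρ x ≤ 1 / ((n : ℝ) + 1)})
    (fun n => by exact_mod_cast hdec n) hne (hcpt 0) (fun n => (hcpt n).isClosed)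
  have hx' : ∀ n : ℕ, ρ x ≤ 1 / ((n : ℝ) + 1) := by
    intro n
    exact Set.mem_iInter.mp hx n
  have hle : ρ x ≤ 0 := ge_of_tendsto' tendsto_one_div_add_atTop_nhds_zero_nat hx'
  linarith [hρ.pos x]

private theorem clamp_abs_le (c t : ℝ) (hc : 0 < c) : |max (-c) (min c t)| ≤ c := by
  rw [abs_le]
  exact ⟨le_max_left _ _, max_le (by linarith) (min_le_left _ _)⟩

private theorem clamp_eq (c t : ℝ) (h : |t| ≤ c) : max (-c) (min c t) = t := by
  rw [abs_le] at h
  rw [min_eq_right h.2, max_eq_right h.1]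

private theorem clamp_sub_le (c t : ℝ) (hc : 0 < c) : |t - max (-c) (min c t)| ≤ |t| := by
  rcases le_total t (-c) with h1 | h1
  · rw [min_eq_right (by linarith : t ≤ c), max_eq_left h1]
    rw [abs_of_nonpos (by linarith), abs_of_nonpos (by linarith)]
    linarith
  · rcases le_total t c with h2 | h2
    · rw [min_eq_right h2, max_eq_right h1]
      simp [abs_nonneg]
    · rw [min_eq_left h2, max_eq_right (by linarith)]
      rw [abs_of_nonneg (by linarith), abs_of_nonneg (by linarith)]
      linarith

universe v

theorem mem_closure_cyl
    {Y : Type v} [NormedAddCommGroup Y] [NormedSpace ℝ Y]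
    (𝓔 : Set (WeakDual ℝ Y)) {ρ : ↥𝓔 → ℝ} (hρ : AdmissibleWeight ρ)
    (f : ↥𝓔 → ℝ) {M : ℝ} (hM : 0 < M) (hb : ∀ x, |f x| ≤ M * ρ x)
    (hc : ∀ R : ℝ, 0 < R → ContinuousOn f {x | ρ x ≤ R})
    (ht : ∀ ε : ℝ, 0 < ε → ∃ R : ℝ, 0 < R ∧ ∀ x, R < ρ x → |f x| ≤ ε * ρ x)
    (h : BddFun ↥𝓔) (hh : ∀ x, h x = f x / ρ x) :
    h ∈ closure {h : BddFun ↥𝓔 | ∃ f : ↥𝓔 → ℝ, IsCylinderFun 𝓔 f ∧ ∀ x, h x = f x / ρ x} := by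
  obtain ⟨δ, hδ0, hδ⟩ := hρ.exists_pos_forall_le
  rw [Metric.mem_closure_iff]
  intro ε hε
  have hε₀ : (0:ℝ) < ε / 8 := by positivity
  set ε₀ : ℝ := ε / 8 with hε₀def
  obtain ⟨R₁, hR₁0, hR₁⟩ := ht ε₀ hε₀
  set c : ℝ := M * R₁ with hcdef
  have hc0 : 0 < c := mul_pos hM hR₁0
  have hη : (0:ℝ) < min (ε₀ * δ) 1 := lt_min (by positivity) one_pos
  set η : ℝ := min (ε₀ * δ) 1 with hηdef
  have hη1 : η ≤ 1 := min_le_right _ _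
  have hηεδ : η ≤ ε₀ * δ := min_le_left _ _
  obtain ⟨χ, A, hχBS, hA0, hχbd, hχid⟩ := exists_chi (c + 1) η (by linarith) hη
  obtain ⟨R₂, hR₂R₁, hR₂0, hAR₂⟩ : ∃ R₂ : ℝ, R₁ < R₂ ∧ 0 < R₂ ∧ A ≤ ε₀ * R₂ := by
    refine ⟨max R₁ (A / ε₀) + 1, ?_, ?_, ?_⟩
    · have := le_max_left R₁ (A / ε₀); linarith
    · have := le_max_left R₁ (A / ε₀); linarith
    · have h1 : A / ε₀ ≤ max R₁ (A / ε₀) + 1 := by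
        have := le_max_right R₁ (A / ε₀); linarith
      rw [div_le_iff₀ hε₀] at h1
      calc A ≤ (max R₁ (A / ε₀) + 1) * ε₀ := h1
        _ = ε₀ * (max R₁ (A / ε₀) + 1) := mul_comm _ _
  -- the clamped function
  set fc : ↥𝓔 → ℝ := fun x => max (-c) (min c (f x)) with hfcdef
  have hfc_abs : ∀ x, |fc x| ≤ c := fun x => clamp_abs_le c (f x) hc0
  have hfc_eqsmall : ∀ x, ρ x ≤ R₁ → fc x = f x := by
    intro x hx
    apply clamp_eq
    calc |f x| ≤ M * ρ x := hb x
      _ ≤ M * R₁ := mul_le_mul_of_nonneg_left hx hM.le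
  have hfc_sub : ∀ x, |f x - fc x| ≤ |f x| := fun x => clamp_sub_le c (f x) hc0
  -- the compact sublevel set
  set K : Set ↥𝓔 := {x | ρ x ≤ R₂} with hKdef
  have hKcpt : IsCompact K := hρ.isCompact_sublevel R₂ hR₂0
  haveI : CompactSpace ↥K := isCompact_iff_compactSpace.mp hKcpt
  -- the subalgebra of restrictions of cylinder functions
  let Alg : Subalgebra ℝ C(↥K, ℝ) :=
    { carrier := {φ | ∃ u : ↥𝓔 → ℝ, IsCylinderFun 𝓔 u ∧ ∀ z : ↥K, φ z = u z.1}
      mul_mem' := by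
        rintro φ₁ φ₂ ⟨u₁, hu₁, he₁⟩ ⟨u₂, hu₂, he₂⟩
        exact ⟨fun lam => u₁ lam * u₂ lam, hu₁.mul' hu₂, fun z => by
          simp [he₁ z, he₂ z]⟩
      one_mem' := ⟨fun _ => 1, IsCylinderFun.const' 1, fun z => rfl⟩
      add_mem' := by
        rintro φ₁ φ₂ ⟨u₁, hu₁, he₁⟩ ⟨u₂, hu₂, he₂⟩
        exact ⟨fun lam => u₁ lam + u₂ lam, hu₁.add' hu₂, fun z => by
          simp [he₁ z, he₂ z]⟩
      zero_mem' := ⟨fun _ => 0, IsCylinderFun.const' 0, fun z => rfl⟩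
      algebraMap_mem' := fun r => ⟨fun _ => r, IsCylinderFun.const' r, fun z => rfl⟩ }
  have hsep : Alg.SeparatesPoints := by
    intro z₁ z₂ hne
    have hnev2 : ((z₁ : ↥𝓔) : WeakDual ℝ Y) ≠ ((z₂ : ↥𝓔) : WeakDual ℝ Y) := by
      intro hcontra
      exact hne (Subtype.ext (Subtype.ext hcontra))
    obtain ⟨y₀, hy₀⟩ : ∃ y₀ : Y,
        ((z₁ : ↥𝓔) : WeakDual ℝ Y) y₀ ≠ ((z₂ : ↥𝓔) : WeakDual ℝ Y) y₀ := by
      by_contra hxx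
      push_neg at hxx
      exact hnev2 (DFunLike.ext _ _ hxx)
    have hd : ((z₂ : ↥𝓔) : WeakDual ℝ Y) y₀ - ((z₁ : ↥𝓔) : WeakDual ℝ Y) y₀ ≠ 0 :=
      sub_ne_zero.mpr (Ne.symm hy₀)
    set q : ℝ := Real.pi / 2 /
      (((z₂ : ↥𝓔) : WeakDual ℝ Y) y₀ - ((z₁ : ↥𝓔) : WeakDual ℝ Y) y₀) with hqdef
    set u : ↥𝓔 → ℝ := fun lam => 1 * Real.sin (q * ((lam : WeakDual ℝ Y) y₀) +
      (-(q * (((z₁ : ↥𝓔) : WeakDual ℝ Y) y₀)))) with hudef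
    have hu : IsCylinderFun 𝓔 u :=
      isCylinderFun_sin_eval y₀ 1 q (-(q * (((z₁ : ↥𝓔) : WeakDual ℝ Y) y₀)))
    have hucont : Continuous (fun z : ↥K => u z.1) :=
      hu.continuous'.comp continuous_subtype_val
    have h1 : u (z₁ : ↥𝓔) = 0 := by
      simp only [hudef]
      rw [show q * (((z₁ : ↥𝓔) : WeakDual ℝ Y) y₀) +
          -(q * (((z₁ : ↥𝓔) : WeakDual ℝ Y) y₀)) = 0 by ring, Real.sin_zero, mul_zero]
    have h2 : u (z₂ : ↥𝓔) = 1 := by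
      simp only [hudef]
      rw [show q * (((z₂ : ↥𝓔) : WeakDual ℝ Y) y₀) +
          -(q * (((z₁ : ↥𝓔) : WeakDual ℝ Y) y₀)) = q *
          ((((z₂ : ↥𝓔) : WeakDual ℝ Y) y₀) - (((z₁ : ↥𝓔) : WeakDual ℝ Y) y₀)) by ring,
        hqdef, div_mul_cancel₀ _ hd, Real.sin_pi_div_two, mul_one]
    refine ⟨fun z : ↥K => u z.1,
      ⟨ContinuousMap.mk (fun z : ↥K => u z.1) hucont, ⟨u, hu, fun z => rfl⟩, rfl⟩, ?_⟩
    show u (z₁ : ↥𝓔) ≠ u (z₂ : ↥𝓔)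
    rw [h1, h2]
    norm_num
  -- Stone–Weierstrass approximation of the clamped function on K
  have hfcK : ContinuousOn fc K := by
    have hclamp : Continuous (fun t : ℝ => max (-c) (min c t)) :=
      continuous_const.max (continuous_const.min continuous_id)
    exact hclamp.comp_continuousOn (hc R₂ hR₂0)
  have hfcKr : Continuous (K.restrict fc) := continuousOn_iff_continuous_restrict.mp hfcK
  obtain ⟨g₀, hg₀⟩ := ContinuousMap.exists_mem_subalgebra_near_continuous_of_separatesPoints
    Alg hsep (K.restrict fc) hfcKr η hη
  obtain ⟨u, hu_cyl, hu_eq⟩ := g₀.2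
  have happrox : ∀ z : ↥K, |u z.1 - fc z.1| < η := by
    intro z
    have := hg₀ z
    rw [hu_eq z, Real.norm_eq_abs] at this
    exact this
  -- the truncated approximant
  set w : ↥𝓔 → ℝ := fun lam => χ (u lam) with hwdef
  have hw_cyl : IsCylinderFun 𝓔 w := hu_cyl.compBS hχBS
  have hub : ∀ x, x ∈ K → |u x| ≤ c + 1 := by
    intro x hx
    have h1 := happrox ⟨x, hx⟩
    have h2 := hfc_abs x
    calc |u x| = |(u x - fc x) + fc x| := by ring_nf
      _ ≤ |u x - fc x| + |fc x| := abs_add_le _ _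
      _ ≤ η + c := by have := h1.le; linarith
      _ ≤ c + 1 := by linarith
  have hwK : ∀ x, x ∈ K → |w x - fc x| ≤ 2 * η := by
    intro x hx
    have h1 : |χ (u x) - u x| ≤ η := hχid (u x) (hub x hx)
    have h2 := (happrox ⟨x, hx⟩).le
    calc |w x - fc x| = |(χ (u x) - u x) + (u x - fc x)| := by rw [hwdef]; ring_nf
      _ ≤ |χ (u x) - u x| + |u x - fc x| := abs_add_le _ _
      _ ≤ η + η := add_le_add h1 h2
      _ = 2 * η := by ring
  have hwbd : ∀ x, |w x| ≤ A := fun x => hχbd (u x)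
  -- the key pointwise weighted estimate
  have hkey : ∀ x, |f x - w x| ≤ 4 * ε₀ * ρ x := by
    intro x
    have hρx := hρ.pos x
    have hδx := hδ x
    rcases le_or_gt (ρ x) R₂ with hx | hx
    · have hxK : x ∈ K := hx
      have h2 := hwK x hxK
      have hηρ : η ≤ ε₀ * ρ x := by
        calc η ≤ ε₀ * δ := hηεδ
          _ ≤ ε₀ * ρ x := mul_le_mul_of_nonneg_left hδx hε₀.le
      rcases le_or_gt (ρ x) R₁ with hx1 | hx1
      · have heq := hfc_eqsmall x hx1
        calc |f x - w x| = |fc x - w x| := by rw [heq]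
          _ = |w x - fc x| := abs_sub_comm _ _
          _ ≤ 2 * η := h2
          _ ≤ 4 * ε₀ * ρ x := by nlinarith
      · have h3 : |f x| ≤ ε₀ * ρ x := hR₁ x hx1
        calc |f x - w x| = |(f x - fc x) + (fc x - w x)| := by ring_nf
          _ ≤ |f x - fc x| + |fc x - w x| := abs_add_le _ _
          _ ≤ |f x| + |w x - fc x| := by
              rw [abs_sub_comm (fc x) (w x)]
              exact add_le_add_left (hfc_sub x) _
          _ ≤ ε₀ * ρ x + 2 * η := by linarith
          _ ≤ 4 * ε₀ * ρ x := by nlinarith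
    · have h3 : |f x| ≤ ε₀ * ρ x := hR₁ x (hR₂R₁.trans hx)
      have h4 : |w x| ≤ ε₀ * ρ x := by
        calc |w x| ≤ A := hwbd x
          _ ≤ ε₀ * R₂ := hAR₂
          _ ≤ ε₀ * ρ x := mul_le_mul_of_nonneg_left hx.le hε₀.le
      calc |f x - w x| ≤ |f x| + |w x| := abs_sub _ _
        _ ≤ ε₀ * ρ x + ε₀ * ρ x := add_le_add h3 h4
        _ ≤ 4 * ε₀ * ρ x := by nlinarith
  -- package the approximant as an element of the bounded functions
  have hmem : Memℓp (fun x : ↥𝓔 => w x / ρ x) ∞ := by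
    apply memℓp_infty
    refine ⟨A / δ, ?_⟩
    rintro r ⟨x, rfl⟩
    have hρx := hρ.pos x
    calc ‖w x / ρ x‖ = |w x| / ρ x := by
          rw [Real.norm_eq_abs, abs_div, abs_of_pos hρx]
      _ ≤ A / δ := div_le_div₀ (hA0.le.trans (le_refl A)) (hwbd x) hδ0 (hδ x)
  refine ⟨(⟨fun x : ↥𝓔 => w x / ρ x, hmem⟩ : BddFun ↥𝓔), ⟨w, hw_cyl, fun x => rfl⟩, ?_⟩
  rw [dist_eq_norm]
  have hnorm : ‖h - (⟨fun x : ↥𝓔 => w x / ρ x, hmem⟩ : BddFun ↥𝓔)‖ ≤ 4 * ε₀ := by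
    apply lp.norm_le_of_forall_le (by positivity)
    intro x
    have hρx := hρ.pos x
    have hcoe : (h - (⟨fun x : ↥𝓔 => w x / ρ x, hmem⟩ : BddFun ↥𝓔)) x
        = h x - w x / ρ x := by
      rw [lp.coeFn_sub]
      rfl
    rw [hcoe, hh x]
    calc ‖f x / ρ x - w x / ρ x‖ = |f x - w x| / ρ x := by
          rw [div_sub_div_same, Real.norm_eq_abs, abs_div, abs_of_pos hρx]
      _ ≤ (4 * ε₀ * ρ x) / ρ x :=
          div_le_div₀ (by nlinarith) (hkey x) hρx le_rfl
      _ = 4 * ε₀ := by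
          rw [mul_div_assoc, div_self hρx.ne', mul_one]
  calc ‖h - (⟨fun x : ↥𝓔 => w x / ρ x, hmem⟩ : BddFun ↥𝓔)‖ ≤ 4 * ε₀ := hnorm
    _ < ε := by rw [hε₀def]; linarith

end Core

/-- **Density of cylinder functions.**  On a weighted space `(𝓔, ρ)` where `𝓔` is a closed
subset of the weak-* dual of a separable Banach space, the closure of the bounded smooth
cylinder functions in `B^ρ(𝓔)` is exactly `𝓑^ρ(𝓔)`; moreover `f ∈ B^ρ(𝓔)` belongs to
`𝓑^ρ(𝓔)` iff it is weak-*-continuous on each `K_R` and `ρ⁻¹|f|` decays outside `K_R`. -/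
theorem cylinder_functions_dense
    {Y : Type u} [NormedAddCommGroup Y] [NormedSpace ℝ Y] [CompleteSpace Y]
    [TopologicalSpace.SeparableSpace Y]
    (𝓔 : Set (WeakDual ℝ Y)) (h𝓔 : IsClosed 𝓔)
    {ρ : ↥𝓔 → ℝ} (hρ : AdmissibleWeight ρ) :
    closure {h : BddFun ↥𝓔 | ∃ f : ↥𝓔 → ℝ, IsCylinderFun 𝓔 f ∧ ∀ x, h x = f x / ρ x}
        = (calB ρ : Set (BddFun ↥𝓔)) ∧
      ∀ f : ↥𝓔 → ℝ, BddAbove (Set.range fun x => |f x| / ρ x) →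
        (MemCalB ρ f ↔
          ((∀ R : ℝ, 0 < R → ContinuousOn f {x | ρ x ≤ R}) ∧
            Tendsto (fun R : ℝ => ⨆ x : {x : ↥𝓔 // R < ρ x}, ENNReal.ofReal (|f x.1| / ρ x.1))
              atTop (nhds 0))) := by
  obtain ⟨δ, hδ0, hδ⟩ := hρ.exists_pos_forall_le
  set cylSet : Set (BddFun ↥𝓔) :=
    {h : BddFun ↥𝓔 | ∃ f : ↥𝓔 → ℝ, IsCylinderFun 𝓔 f ∧ ∀ x, h x = f x / ρ x} with hcylSet
  have hsub : cylSet ⊆ (preCalB ρ : Set (BddFun ↥𝓔)) := by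
    rintro g ⟨f, hf, hfe⟩
    exact ⟨f, hf.continuous', hf.bounded', hfe⟩
  have hsub2 : cylSet ⊆ (calB ρ : Set (BddFun ↥𝓔)) := fun g hg =>
    Submodule.le_topologicalClosure _ (hsub hg)
  have hclosed : IsClosed ((calB ρ : Set (BddFun ↥𝓔))) :=
    Submodule.isClosed_topologicalClosure _
  have hforward : closure cylSet ⊆ (calB ρ : Set (BddFun ↥𝓔)) :=
    closure_minimal hsub2 hclosed
  have hcore : ∀ f : ↥𝓔 → ℝ, (∃ M, 0 < M ∧ ∀ x, |f x| ≤ M * ρ x) →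
      (∀ R, 0 < R → ContinuousOn f {x | ρ x ≤ R}) →
      (∀ ε, 0 < ε → ∃ R, 0 < R ∧ ∀ x, R < ρ x → |f x| ≤ ε * ρ x) →
      ∀ h : BddFun ↥𝓔, (∀ x, h x = f x / ρ x) → h ∈ closure cylSet := by
    rintro f ⟨M, hM, hb⟩ hc ht h hh
    exact mem_closure_cyl 𝓔 hρ f hM hb hc ht h hh
  have hcoe : (calB ρ : Set (BddFun ↥𝓔)) = closure (preCalB ρ : Set (BddFun ↥𝓔)) :=
    Submodule.topologicalClosure_coe _
  have hbackward : (calB ρ : Set (BddFun ↥𝓔)) ⊆ closure cylSet := by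
    have h1 : (preCalB ρ : Set (BddFun ↥𝓔)) ⊆ closure cylSet := by
      rintro g ⟨f, hfc, ⟨C, hC⟩, hfe⟩
      refine hcore f ⟨(max C 0 + 1) / δ, by positivity, fun x => ?_⟩
        (fun R hR => hfc.continuousOn) (fun ε hε => ?_) g hfe
      · have h2 : |f x| ≤ max C 0 + 1 := le_trans (hC x) (by
          have := le_max_left C 0; linarith)
        have h3 : max C 0 + 1 ≤ (max C 0 + 1) / δ * ρ x := by
          rw [div_mul_eq_mul_div, le_div_iff₀ hδ0]
          have h4 := hδ x
          nlinarith [le_max_right C 0]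
        linarith
      · refine ⟨(max C 0 + 1) / ε, by positivity, fun x hx => ?_⟩
        rw [div_lt_iff₀ hε] at hx
        have h2 : |f x| ≤ max C 0 + 1 := le_trans (hC x) (by
          have := le_max_left C 0; linarith)
        nlinarith
    calc (calB ρ : Set (BddFun ↥𝓔)) = closure (preCalB ρ : Set (BddFun ↥𝓔)) := hcoe
      _ ⊆ closure cylSet := closure_minimal h1 isClosed_closure
  constructor
  · exact Set.Subset.antisymm hforward hbackward
  · intro f hbdd
    constructor
    · -- forward direction: membership implies continuity on sublevels and decay
      rintro ⟨g, hg, hge⟩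
      have hgc : (g : BddFun ↥𝓔) ∈ closure (preCalB ρ : Set (BddFun ↥𝓔)) := by
        rw [← hcoe]; exact hg
      have hgseq : ∀ n : ℕ, ∃ b ∈ (preCalB ρ : Set (BddFun ↥𝓔)), dist g b < 1 / ((n : ℝ) + 1) :=
        fun n => Metric.mem_closure_iff.mp hgc _ (by positivity)
      choose seq hseqmem hseqdist using hgseq
      choose fn hfnc hfnB hfne using hseqmem
      constructor
      · intro R hR
        have htu : TendstoUniformlyOn (fun n x => fn n x) f atTop {x | ρ x ≤ R} := by
          rw [Metric.tendstoUniformlyOn_iff]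
          intro ε' hε'
          obtain ⟨N, hN⟩ := exists_nat_one_div_lt (show (0:ℝ) < ε' / (R + 1) by positivity)
          refine Filter.eventually_atTop.mpr ⟨N, fun n hn x hx => ?_⟩
          have hρx := hρ.pos x
          have hdn : ‖g - seq n‖ < ε' / (R + 1) := by
            rw [← dist_eq_norm]
            calc dist g (seq n) < 1 / ((n : ℝ) + 1) := hseqdist n
              _ ≤ 1 / ((N : ℝ) + 1) := by
                  apply one_div_le_one_div_of_le (by positivity)
                  exact_mod_cast Nat.succ_le_succ hn
              _ < ε' / (R + 1) := hN
          have happ : ‖(g - seq n) x‖ ≤ ‖g - seq n‖ :=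
            lp.norm_apply_le_norm (by norm_num) (g - seq n) x
          have happ2 : (g - seq n) x = g x - seq n x := by
            rw [lp.coeFn_sub]; rfl
          have hfd : f x - fn n x = ρ x * (g x - seq n x) := by
            rw [hge x, hfne n x, mul_sub]
            field_simp
          have hxR : ρ x ≤ R := hx
          rw [Real.dist_eq, hfd, abs_mul, abs_of_pos hρx]
          have hb1 : |g x - seq n x| < ε' / (R + 1) := by
            rw [← Real.norm_eq_abs, ← happ2]
            exact lt_of_le_of_lt happ hdn
          have hnn : (0:ℝ) ≤ |g x - seq n x| := abs_nonneg _
          have hbound : ρ x * |g x - seq n x| ≤ R * |g x - seq n x| :=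
            mul_le_mul_of_nonneg_right hxR hnn
          have hmulR : R * |g x - seq n x| < R * (ε' / (R + 1)) :=
            mul_lt_mul_of_pos_left hb1 hR
          have hfin : R * (ε' / (R + 1)) < ε' := by
            rw [← mul_div_assoc, div_lt_iff₀ (show (0:ℝ) < R + 1 by linarith)]
            nlinarith
          linarith
        exact htu.continuousOn (Filter.Frequently.of_forall fun n => (hfnc n).continuousOn)
      · rw [ENNReal.tendsto_nhds_zero]
        intro ε' hε'
        obtain ⟨e, he0, hee⟩ : ∃ e : ℝ, 0 < e ∧ ENNReal.ofReal e ≤ ε' := by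
          rcases eq_or_ne ε' ⊤ with rfl | hne
          · exact ⟨1, one_pos, le_top⟩
          · exact ⟨ε'.toReal, ENNReal.toReal_pos hε'.ne' hne, by
              rw [ENNReal.ofReal_toReal hne]⟩
        obtain ⟨N, hN⟩ := exists_nat_one_div_lt (show (0:ℝ) < e / 2 by positivity)
        have hdn : ‖g - seq N‖ < e / 2 := by
          rw [← dist_eq_norm]
          exact (hseqdist N).trans hN
        obtain ⟨Cn, hCn⟩ := hfnB N
        refine Filter.eventually_atTop.mpr ⟨2 * max Cn 0 / e + 1, fun R hR => ?_⟩
        apply iSup_le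
        rintro ⟨x, hx⟩
        have hρx := hρ.pos x
        refine le_trans (ENNReal.ofReal_le_ofReal ?_) hee
        have h1 : |f x| / ρ x = |g x| := by
          rw [hge x, abs_div, abs_of_pos hρx]
        have h2 : |g x - seq N x| ≤ e / 2 := by
          have happ : ‖(g - seq N) x‖ ≤ ‖g - seq N‖ :=
            lp.norm_apply_le_norm (by norm_num) (g - seq N) x
          have happ2 : (g - seq N) x = g x - seq N x := by
            rw [lp.coeFn_sub]; rfl
          rw [← Real.norm_eq_abs, ← happ2]
          exact le_trans happ hdn.le
        have h3 : |seq N x| ≤ max Cn 0 / ρ x := by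
          rw [hfne N x, abs_div, abs_of_pos hρx]
          exact div_le_div₀ (le_max_right Cn 0) ((hCn x).trans (le_max_left _ _)) hρx le_rfl
        have h4 : max Cn 0 / ρ x ≤ e / 2 := by
          have hxR : 2 * max Cn 0 / e + 1 < ρ x := lt_of_le_of_lt hR hx
          have h5 : 2 * max Cn 0 / e < ρ x - 1 := by linarith
          rw [div_lt_iff₀ he0] at h5
          rw [div_le_iff₀ hρx]
          have hCn0 : (0:ℝ) ≤ max Cn 0 := le_max_right _ _
          nlinarith
        calc |f x| / ρ x = |g x| := h1
          _ = |(g x - seq N x) + seq N x| := by ring_nf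
          _ ≤ |g x - seq N x| + |seq N x| := abs_add_le _ _
          _ ≤ e / 2 + e / 2 := add_le_add h2 (h3.trans h4)
          _ = e := by ring
    · -- backward direction
      rintro ⟨hcont, htail⟩
      obtain ⟨M₀, hM₀⟩ := hbdd
      have hM₀mem : ∀ x, |f x| / ρ x ≤ M₀ := fun x => hM₀ ⟨x, rfl⟩
      have hb' : ∀ x, |f x| ≤ (max M₀ 0 + 1) * ρ x := by
        intro x
        have hρx := hρ.pos x
        have h6 := hM₀mem x
        rw [div_le_iff₀ hρx] at h6
        have h7 : M₀ ≤ max M₀ 0 := le_max_left _ _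
        nlinarith
      have hmem : Memℓp (fun x : ↥𝓔 => f x / ρ x) ∞ := by
        apply memℓp_infty
        refine ⟨max M₀ 0, ?_⟩
        rintro r ⟨x, rfl⟩
        have hρx := hρ.pos x
        calc ‖f x / ρ x‖ = |f x| / ρ x := by
              rw [Real.norm_eq_abs, abs_div, abs_of_pos hρx]
          _ ≤ M₀ := hM₀mem x
          _ ≤ max M₀ 0 := le_max_left _ _
      have ht' : ∀ ε, 0 < ε → ∃ R, 0 < R ∧ ∀ x, R < ρ x → |f x| ≤ ε * ρ x := by
        intro ε hε
        have h5 := (ENNReal.tendsto_nhds_zero.mp htail) (ENNReal.ofReal ε)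
          (ENNReal.ofReal_pos.mpr hε)
        obtain ⟨R₀, hR₀⟩ := Filter.eventually_atTop.mp h5
        refine ⟨max R₀ 1, lt_of_lt_of_le one_pos (le_max_right _ _), fun x hx => ?_⟩
        have hρx := hρ.pos x
        have h6 : ENNReal.ofReal (|f x| / ρ x) ≤ ENNReal.ofReal ε := by
          refine le_trans ?_ (hR₀ (max R₀ 1) (le_max_left _ _))
          exact le_iSup (fun z : {x : ↥𝓔 // max R₀ 1 < ρ x} =>
            ENNReal.ofReal (|f z.1| / ρ z.1)) ⟨x, hx⟩
        rw [ENNReal.ofReal_le_ofReal_iff hε.le] at h6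
        rw [div_le_iff₀ hρx] at h6
        linarith
      have hmemcl : (⟨fun x : ↥𝓔 => f x / ρ x, hmem⟩ : BddFun ↥𝓔) ∈ closure cylSet :=
        hcore f ⟨max M₀ 0 + 1, by positivity, hb'⟩ hcont ht' _ (fun x => rfl)
      exact ⟨_, hforward hmemcl, fun x => rfl⟩

end
end

section
/- Let (X, ρ) be a weighted space and let (P_t)_{t≥0} be a generalized Feller semigroup on 𝓑^ρ(X) with ‖P_t‖_{L(𝓑^ρ(X))} ≤ M exp(ωt) for some M ≥ 1 and ω ∈ ℝ, which is of transport type: P_t f = f ∘ ψ_t for a semiflow of continuous maps ψ_t : X → X (ψ_0 = id, ψ_{t+s} = ψ_s ∘ ψ_t). Define ρ̃(x) := sup_{t≥0} exp(−ωt) ρ(ψ_t(x)). Then: (i) ρ̃ is an admissible weight function on X; (ii) ρ ≤ ρ̃ ≤ M ρ, so the norm ‖f‖_{ρ̃} := sup_x |f(x)|/ρ̃(x) is equivalent to ‖·‖_ρ on 𝓑^ρ(X); (iii) ‖P_t f‖_{ρ̃} ≤ exp(ωt) ‖f‖_{ρ̃} for all t ≥ 0 and f ∈ 𝓑^ρ(X);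 and (iv) ρ̃(ψ_t(x)) ≤ exp(ωt) ρ̃(x) for all x ∈ X and t ≥ 0 (i.e. P_t ρ̃ ≤ exp(ωt) ρ̃). -/
open scoped ENNReal NNReal
open Filter Set MeasureTheory TopologicalSpace

noncomputable section

variable {X : Type*} [TopologicalSpace X] {ρ : X → ℝ}

universe u

/-- The renormalized weight `ρ̃(x) = sup_{t ≥ 0} exp(-ωt) ρ(ψ_t(x))`. -/
def tildeWeight {X : Type u} (ρ : X → ℝ) (ψ : ℝ≥0 → X → X) (w : ℝ) (x : X) : ℝ :=
  ⨆ t : ℝ≥0, Real.exp (-(w * t)) * ρ (ψ t x)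

/-!
Testing `P_t` against a continuous `f` with `0 ≤ f ≤ ρ`, `f ≤ c` and `f(ψ_t x) = c` (an Urysohn
function separating `ψ_t x` from the closed sublevel set `{ρ ≤ c}`) gives
`ρ(ψ_t x) ≤ ‖P_t‖ ρ(x) ≤ M e^{ωt} ρ(x)`. So every term of the supremum defining `ρ̃(x)` is at most
`M ρ(x)`, the term `t = 0` is `ρ(x)`, and the semiflow property turns the supremum over `s` for
`ψ_t x` into a part of the supremum over `s + t` for `x`, whence `ρ̃ ∘ ψ_t ≤ e^{ωt} ρ̃`; this in turn
gives the contraction of `P_t` in the `ρ̃`-norm. The sublevel sets of `ρ̃` are closed, `ρ̃` being a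
supremum of lower semicontinuous functions, and lie inside those of `ρ`.
-/

open Real

section WeightedSpace

variable {X : Type*} [TopologicalSpace X] {ρ : X → ℝ}

lemma AdmissibleWeight.lowerSemicontinuous [T2Space X] (hρ : AdmissibleWeight ρ) :
    LowerSemicontinuous ρ := by
  refine lowerSemicontinuous_iff_isClosed_preimage.2 fun R => ?_
  rcases le_or_gt R 0 with hR | hR
  · convert isClosed_empty
    exact Set.eq_empty_of_forall_notMem fun x hx => ((hρ.pos x).trans_le hx).not_ge hR
  · exact (hρ.isCompact_sublevel R hR).isClosed

lemma valOf_le_mul_norm {x : X} (hx : 0 ≤ ρ x) (f : calB ρ) : valOf f x ≤ ρ x * ‖f‖ := by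
  have hscaled : |scaledApp f x| ≤ ‖f‖ := by
    show |(f : BddFun X) x| ≤ ‖(f : BddFun X)‖
    simpa only [Real.norm_eq_abs] using lp.norm_apply_le_norm ENNReal.top_ne_zero (f : BddFun X) x
  exact mul_le_mul_of_nonneg_left ((le_abs_self _).trans hscaled) hx

lemma exists_calB_norm_le_one_valOf_eq (hρ : ∀ x, 0 < ρ x) {f : X → ℝ} (hf : Continuous f)
    {C : ℝ} (hC : ∀ x, |f x| ≤ C) (hfρ : ∀ x, |f x| ≤ ρ x) :
    ∃ F : calB ρ, ‖F‖ ≤ 1 ∧ ∀ x, valOf F x = f x := by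
  have hg : ∀ x, ‖f x / ρ x‖ ≤ 1 := fun x => by
    rw [Real.norm_eq_abs, abs_div, abs_of_pos (hρ x)]
    exact div_le_one_of_le₀ (hfρ x) (hρ x).le
  let G : BddFun X := ⟨fun x => f x / ρ x, memℓp_infty ⟨1, by rintro _ ⟨x, rfl⟩; exact hg x⟩⟩
  refine ⟨⟨G, Submodule.le_topologicalClosure _ ⟨f, hf, ⟨C, hC⟩, fun x => rfl⟩⟩,
    lp.norm_le_of_forall_le zero_le_one hg, fun x => ?_⟩
  exact mul_div_cancel₀ _ (hρ x).ne'

lemma exists_calB_norm_le_one_valOf_eq_of_lt [T2Space X] [CompletelyRegularSpace X]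
    (hρ : AdmissibleWeight ρ) {y : X} {c : ℝ} (hc : 0 < c) (hcy : c < ρ y) :
    ∃ F : calB ρ, ‖F‖ ≤ 1 ∧ valOf F y = c := by
  obtain ⟨u, hu, huy, huK⟩ := CompletelyRegularSpace.completely_regular y {z | ρ z ≤ c}
    (hρ.lowerSemicontinuous.isClosed_preimage c) (not_le.2 hcy)
  set f : X → ℝ := fun z => c * (1 - u z)
  have hf_nonneg : ∀ z, 0 ≤ f z := fun z => mul_nonneg hc.le (sub_nonneg.2 (u z).2.2)
  have hf_le : ∀ z, f z ≤ c := fun z => mul_le_of_le_one_right hc.le (sub_le_self _ (u z).2.1)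
  have hf_le_ρ : ∀ z, f z ≤ ρ z := by
    intro z
    by_cases hz : ρ z ≤ c
    · simp [f, huK hz, (hρ.pos z).le]
    · exact (hf_le z).trans (le_of_not_ge hz)
  obtain ⟨F, hF, hFf⟩ := exists_calB_norm_le_one_valOf_eq hρ.pos (by fun_prop) (C := c)
    (fun z => (abs_of_nonneg (hf_nonneg z)).trans_le (hf_le z))
    (fun z => (abs_of_nonneg (hf_nonneg z)).trans_le (hf_le_ρ z))
  exact ⟨F, hF, by simp [hFf, f, huy]⟩

theorem weight_le_opNorm_mul_of_valOf_eq [T2Space X] [CompletelyRegularSpace X]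
    (hρ : AdmissibleWeight ρ) {T : calB ρ →L[ℝ] calB ρ} {φ : X → X}
    (hT : ∀ f x, valOf (T f) x = valOf f (φ x)) (x : X) :
    ρ (φ x) ≤ ‖T‖ * ρ x := by
  refine le_of_forall_lt_imp_le_of_dense fun c hc => ?_
  rcases le_or_gt c 0 with hc0 | hc0
  · exact hc0.trans (mul_nonneg (norm_nonneg T) (hρ.pos x).le)
  obtain ⟨F, hF, hFc⟩ := exists_calB_norm_le_one_valOf_eq_of_lt hρ hc0 hc
  calc c = valOf (T F) x := by rw [hT, hFc]
    _ ≤ ρ x * ‖T F‖ := valOf_le_mul_norm (hρ.pos x).le _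
    _ ≤ ρ x * ‖T‖ := mul_le_mul_of_nonneg_left (T.unit_le_opNorm F hF) (hρ.pos x).le
    _ = ‖T‖ * ρ x := mul_comm _ _

end WeightedSpace

lemma iSup_ofReal_abs_comp_div_le {X : Type*} {v : X → ℝ} (hv : ∀ x, 0 < v x) {φ : X → X}
    {a : ℝ} (hφ : ∀ x, v (φ x) ≤ a * v x) (g : X → ℝ) :
    ⨆ x, ENNReal.ofReal (|g (φ x)| / v x) ≤
      ENNReal.ofReal a * ⨆ x, ENNReal.ofReal (|g x| / v x) := by
  refine iSup_le fun x => ?_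
  have hvφ : v (φ x) / v x ≤ a := (div_le_iff₀ (hv x)).2 (hφ x)
  have hpoint : |g (φ x)| / v x ≤ a * (|g (φ x)| / v (φ x)) :=
    calc |g (φ x)| / v x = |g (φ x)| / v (φ x) * (v (φ x) / v x) := by
          field_simp [(hv x).ne', (hv (φ x)).ne']
      _ ≤ |g (φ x)| / v (φ x) * a := by have := hv (φ x); gcongr
      _ = a * (|g (φ x)| / v (φ x)) := mul_comm _ _
  calc ENNReal.ofReal (|g (φ x)| / v x)
      ≤ ENNReal.ofReal a * ENNReal.ofReal (|g (φ x)| / v (φ x)) := by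
        rw [← ENNReal.ofReal_mul ((div_pos (hv _) (hv x)).le.trans hvφ)]
        exact ENNReal.ofReal_le_ofReal hpoint
    _ ≤ ENNReal.ofReal a * ⨆ y, ENNReal.ofReal (|g y| / v y) := by
        gcongr
        exact le_iSup (fun y => ENNReal.ofReal (|g y| / v y)) (φ x)

section TildeWeight

variable {X : Type*} {ρ : X → ℝ} {ψ : ℝ≥0 → X → X} {M w : ℝ}
  (hgrowth : ∀ (t : ℝ≥0) x, ρ (ψ t x) ≤ M * exp (w * t) * ρ x)
include hgrowth

lemma exp_neg_mul_weight_comp_le (x : X) (t : ℝ≥0) : exp (-(w * t)) * ρ (ψ t x) ≤ M * ρ x :=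
  calc exp (-(w * t)) * ρ (ψ t x) ≤ exp (-(w * t)) * (M * exp (w * t) * ρ x) := by
        gcongr; exact hgrowth t x
    _ = M * ρ x := by rw [exp_neg]; field_simp

lemma bddAbove_range_exp_neg_mul_weight_comp (x : X) :
    BddAbove (Set.range fun t : ℝ≥0 => exp (-(w * t)) * ρ (ψ t x)) :=
  ⟨M * ρ x, Set.forall_mem_range.2 (exp_neg_mul_weight_comp_le hgrowth x)⟩

lemma tildeWeight_le_mul (x : X) : tildeWeight ρ ψ w x ≤ M * ρ x :=
  ciSup_le (exp_neg_mul_weight_comp_le hgrowth x)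

lemma le_tildeWeight (hψ0 : ψ 0 = id) (x : X) : ρ x ≤ tildeWeight ρ ψ w x := by
  simpa [tildeWeight, hψ0] using le_ciSup (bddAbove_range_exp_neg_mul_weight_comp hgrowth x) 0

lemma tildeWeight_comp_le (hψsg : ∀ s t : ℝ≥0, ψ (s + t) = ψ s ∘ ψ t) (t : ℝ≥0) (x : X) :
    tildeWeight ρ ψ w (ψ t x) ≤ exp (w * t) * tildeWeight ρ ψ w x := by
  refine ciSup_le fun s => ?_
  calc exp (-(w * s)) * ρ (ψ s (ψ t x))
      = exp (w * t) * (exp (-(w * ↑(s + t))) * ρ (ψ (s + t) x)) := by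
        rw [hψsg, Function.comp_apply, ← mul_assoc, ← exp_add]
        push_cast; ring_nf
    _ ≤ exp (w * t) * tildeWeight ρ ψ w x := by
        gcongr
        exact le_ciSup (bddAbove_range_exp_neg_mul_weight_comp hgrowth x) (s + t)

lemma lowerSemicontinuous_tildeWeight [TopologicalSpace X] (hρ : LowerSemicontinuous ρ)
    (hψc : ∀ t, Continuous (ψ t)) : LowerSemicontinuous (tildeWeight ρ ψ w) :=
  lowerSemicontinuous_ciSup (bddAbove_range_exp_neg_mul_weight_comp hgrowth) fun t =>
    (continuous_const.mul continuous_id).comp_lowerSemicontinuous (hρ.comp (hψc t))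
      fun _ _ h => mul_le_mul_of_nonneg_left h (exp_pos _).le

lemma admissibleWeight_tildeWeight [TopologicalSpace X] [T2Space X] (hρ : AdmissibleWeight ρ)
    (hψc : ∀ t, Continuous (ψ t)) (hψ0 : ψ 0 = id) : AdmissibleWeight (tildeWeight ρ ψ w) where
  pos x := (hρ.pos x).trans_le (le_tildeWeight hgrowth hψ0 x)
  isCompact_sublevel R hR :=
    (hρ.isCompact_sublevel R hR).of_isClosed_subset
      ((lowerSemicontinuous_tildeWeight hgrowth hρ.lowerSemicontinuous hψc).isClosed_preimage R)
      fun x hx => (le_tildeWeight hgrowth hψ0 x).trans hx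
  isSeparable_sublevel R hR :=
    (hρ.isSeparable_sublevel R hR).mono fun x hx => (le_tildeWeight hgrowth hψ0 x).trans hx

end TildeWeight

theorem transport_renormalized_weight_general
    {X : Type u} [TopologicalSpace X] [T2Space X] [CompletelyRegularSpace X]
    {ρ : X → ℝ} (hρ : AdmissibleWeight ρ)
    (ψ : ℝ≥0 → X → X) (hψc : ∀ t : ℝ≥0, Continuous (ψ t)) (hψ0 : ψ 0 = id)
    (hψsg : ∀ s t : ℝ≥0, ψ (s + t) = ψ s ∘ ψ t)
    (P : ℝ≥0 → (calB ρ) →L[ℝ] (calB ρ))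
    (htrans : ∀ (t : ℝ≥0) (f : calB ρ) (x : X), valOf (P t f) x = valOf f (ψ t x))
    (M w : ℝ)
    (hgb : ∀ t : ℝ≥0, ‖P t‖ ≤ M * Real.exp (w * t)) :
    AdmissibleWeight (tildeWeight ρ ψ w) ∧
    (∀ x : X, ρ x ≤ tildeWeight ρ ψ w x ∧ tildeWeight ρ ψ w x ≤ M * ρ x) ∧
    (∀ (t : ℝ≥0) (f : calB ρ),
      (⨆ x : X, ENNReal.ofReal (|valOf (P t f) x| / tildeWeight ρ ψ w x)) ≤
        ENNReal.ofReal (Real.exp (w * t)) *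
          ⨆ x : X, ENNReal.ofReal (|valOf f x| / tildeWeight ρ ψ w x)) ∧
    (∀ (t : ℝ≥0) (x : X), tildeWeight ρ ψ w (ψ t x) ≤ Real.exp (w * t) * tildeWeight ρ ψ w x) := by
  have hgrowth : ∀ (t : ℝ≥0) x, ρ (ψ t x) ≤ M * exp (w * t) * ρ x := fun t x =>
    (weight_le_opNorm_mul_of_valOf_eq hρ (htrans t) x).trans
      (mul_le_mul_of_nonneg_right (hgb t) (hρ.pos x).le)
  have hadm := admissibleWeight_tildeWeight hgrowth hρ hψc hψ0
  refine ⟨hadm, fun x => ⟨le_tildeWeight hgrowth hψ0 x, tildeWeight_le_mul hgrowth x⟩,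
    fun t f => ?_, tildeWeight_comp_le hgrowth hψsg⟩
  simp only [htrans]
  exact iSup_ofReal_abs_comp_div_le hadm.pos (tildeWeight_comp_le hgrowth hψsg t) _

/-- **Renormalization of transport-type generalized Feller semigroups.**  If `P_t f = f ∘ ψ_t`
with `‖P_t‖ ≤ M exp(ωt)`, then `ρ̃ := sup_t exp(-ωt) (ρ ∘ ψ_t)` is an admissible weight,
`ρ ≤ ρ̃ ≤ M ρ` (so the `ρ̃`-norm is equivalent), `‖P_t f‖_{ρ̃} ≤ exp(ωt) ‖f‖_{ρ̃}` and
`P_t ρ̃ ≤ exp(ωt) ρ̃`. -/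
theorem transport_renormalized_weight
    {X : Type u} [TopologicalSpace X] [T2Space X] [CompletelyRegularSpace X]
    {ρ : X → ℝ} (hρ : AdmissibleWeight ρ)
    (ψ : ℝ≥0 → X → X) (hψc : ∀ t : ℝ≥0, Continuous (ψ t)) (hψ0 : ψ 0 = id)
    (hψsg : ∀ s t : ℝ≥0, ψ (s + t) = ψ s ∘ ψ t)
    (P : ℝ≥0 → (calB ρ) →L[ℝ] (calB ρ)) (hP : IsGenFellerSemigroup ρ P)
    (htrans : ∀ (t : ℝ≥0) (f : calB ρ) (x : X), valOf (P t f) x = valOf f (ψ t x))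
    (M w : ℝ) (hM : 1 ≤ M)
    (hgb : ∀ t : ℝ≥0, ‖P t‖ ≤ M * Real.exp (w * t)) :
    AdmissibleWeight (tildeWeight ρ ψ w) ∧
    (∀ x : X, ρ x ≤ tildeWeight ρ ψ w x ∧ tildeWeight ρ ψ w x ≤ M * ρ x) ∧
    (∀ (t : ℝ≥0) (f : calB ρ),
      (⨆ x : X, ENNReal.ofReal (|valOf (P t f) x| / tildeWeight ρ ψ w x)) ≤
        ENNReal.ofReal (Real.exp (w * t)) *
          ⨆ x : X, ENNReal.ofReal (|valOf f x| / tildeWeight ρ ψ w x)) ∧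
    (∀ (t : ℝ≥0) (x : X), tildeWeight ρ ψ w (ψ t x) ≤ Real.exp (w * t) * tildeWeight ρ ψ w x) :=
  transport_renormalized_weight_general hρ ψ hψc hψ0 hψsg P htrans M w hgb
end
end

section
/- Let E, the multiplications (A,λ) ↦ A·λ and (λ,A) ↦ λ·A by symmetric matrices, the strongly continuous semigroup (S_t), the bounded linear map β : E → 𝕊^d, and κ : (0,∞) → E with S_t κ(s) = κ(t+s) and ∫₀ᵗ ‖κ(s)‖² ds < ∞ be as in the mild Volterra setting, and for λ₀ ∈ E let (λ_t)_{t≥0} denote the unique continuous mild solution of λ_t = S_t λ₀ + ∫₀ᵗ ( κ(t−s)·β(λ_s) + β(λ_s)·κ(t−s) ) ds. Suppose C ⊆ E is a closed convex cone such that S_t(C) ⊆ C for all t ≥ 0, κ(t) ∈ C for all t > 0, β(C) ⊆ 𝕊^d₊ (the positive semidefinite matrices), and μ·A + A·μ ∈ C for all μ ∈ C and A ∈ 𝕊^d₊. Then the solution leaves C invariant: λ₀ ∈ C implies λ_t ∈ C for all t ≥ 0. -/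
open scoped ENNReal NNReal Matrix
open Filter Set MeasureTheory

noncomputable section

attribute [local instance] Matrix.frobeniusNormedAddCommGroup Matrix.frobeniusNormedSpace

/-- The space `𝕊^d` of symmetric `d × d` real matrices; via the ambient Frobenius norm it
carries the norm `‖u‖ = √(Tr(u²))`. -/
def symMat (d : ℕ) : Submodule ℝ (Matrix (Fin d) (Fin d) ℝ) where
  carrier := {A | A.IsSymm}
  add_mem' := by
    intro A B hA hB
    show (A + B).IsSymm
    rw [Matrix.IsSymm] at *
    rw [Matrix.transpose_add, hA, hB]
  zero_mem' := by
    show (0 : Matrix (Fin d) (Fin d) ℝ).IsSymm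
    rw [Matrix.IsSymm, Matrix.transpose_zero]
  smul_mem' := by
    intro c A hA
    show (c • A).IsSymm
    rw [Matrix.IsSymm] at *
    rw [Matrix.transpose_smul, hA]

/-- A continuous mild solution of the lifted deterministic Volterra equation
`λ_t = S_t λ₀ + ∫₀ᵗ ( κ(t-s)·β(λ_s) + β(λ_s)·κ(t-s) ) ds`, where `mulL` and `mulR`
denote left and right multiplication of elements of `E` by symmetric matrices. -/
def IsMildSol {d : ℕ} {E : Type*} [NormedAddCommGroup E] [NormedSpace ℝ E]
    (mulL : ↥(symMat d) →L[ℝ] E →L[ℝ] E) (mulR : E →L[ℝ] ↥(symMat d) →L[ℝ] E)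
    (S : ℝ → E →L[ℝ] E) (β : E →L[ℝ] ↥(symMat d)) (κ : ℝ → E)
    (x₀ : E) (lam : ℝ → E) : Prop :=
  ContinuousOn lam (Ici 0) ∧ lam 0 = x₀ ∧
  ∀ t : ℝ, 0 ≤ t →
    lam t = S t x₀ +
      ∫ s in Ioc (0 : ℝ) t, (mulR (κ (t - s)) (β (lam s)) + mulL (β (lam s)) (κ (t - s)))

open Metric Topology
open scoped NNReal

/-!
Let `d t` be the distance from `λ_t` to `C`. For a convex cone, `x ↦ infDist x C` is sublinear,
so Jensen's inequality bounds the distance of the integral term by the integral of the distances,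
and `S_t λ₀ ∈ C` costs nothing. The integrand `y ↦ κ(t-s)·β(y) + β(y)·κ(t-s)` is a linear map
sending `C` into `C`, hence it moves the distance to `C` by at most its norm, `O(‖κ(t-s)‖)`. This
gives `d t ≤ ∫₀ᵗ k(t-s) d(s) ds` with `k` locally integrable, and `d` vanishes on successive
windows of a length `δ` with `∫₀^δ k ≤ 1/2`.
-/
theorem LipschitzWith.infDist_le_mul {X Y : Type*} [PseudoMetricSpace X] [PseudoMetricSpace Y]
    {f : X → Y} {K : ℝ≥0} (hf : LipschitzWith K f) {s : Set X} {t : Set Y} (hst : MapsTo f s t)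
    (hs : s.Nonempty) (x : X) : infDist (f x) t ≤ K * infDist x s := by
  have : Nonempty s := hs.to_subtype
  rw [infDist_eq_iInf (x := x), Real.mul_iInf_of_nonneg K.coe_nonneg]
  exact le_ciInf fun c => (infDist_le_dist_of_mem (hst c.2)).trans (hf.dist_le_mul x c)

section Cone

variable {E : Type*} [NormedAddCommGroup E] {C : Set E}

theorem infDist_add_le (hadd : ∀ a ∈ C, ∀ b ∈ C, a + b ∈ C) (hC : C.Nonempty) (x y : E) :
    infDist (x + y) C ≤ infDist x C + infDist y C := by
  rw [← sub_le_iff_le_add, le_infDist hC]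
  intro a ha
  have htrans : infDist (a + y) C ≤ infDist y C := by
    simpa using (isometry_add_left a).lipschitz.infDist_le_mul (hadd a ha) hC y
  have := infDist_le_infDist_add_dist (x := x + y) (y := a + y) (s := C)
  rw [dist_add_right] at this
  linarith

variable [NormedSpace ℝ E]

theorem Convex.add_mem_of_smul_mem (hconv : Convex ℝ C)
    (hsmul : ∀ c : ℝ, 0 ≤ c → ∀ x ∈ C, c • x ∈ C) {a b : E} (ha : a ∈ C) (hb : b ∈ C) :
    a + b ∈ C := by
  have hmid : (2⁻¹ : ℝ) • a + (2⁻¹ : ℝ) • b ∈ C :=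
    hconv ha hb (by norm_num) (by norm_num) (by norm_num)
  convert hsmul 2 zero_le_two _ hmid using 1
  simp [smul_add, smul_smul]

theorem infDist_smul_le (hsmul : ∀ c : ℝ, 0 ≤ c → ∀ x ∈ C, c • x ∈ C) (hC : C.Nonempty)
    {c : ℝ} (hc : 0 ≤ c) (x : E) : infDist (c • x) C ≤ c * infDist x C := by
  simpa [abs_of_nonneg hc] using (lipschitzWith_smul c).infDist_le_mul (hsmul c hc) hC x

theorem convexOn_infDist (hadd : ∀ a ∈ C, ∀ b ∈ C, a + b ∈ C)
    (hsmul : ∀ c : ℝ, 0 ≤ c → ∀ x ∈ C, c • x ∈ C) (hC : C.Nonempty) :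
    ConvexOn ℝ univ (infDist · C) :=
  ⟨convex_univ, fun x _ y _ _ _ ha hb _ => (infDist_add_le hadd hC _ _).trans
    (add_le_add (infDist_smul_le hsmul hC ha x) (infDist_smul_le hsmul hC hb y))⟩

variable [CompleteSpace E] {α : Type*} [MeasurableSpace α]

theorem infDist_integral_le (hadd : ∀ a ∈ C, ∀ b ∈ C, a + b ∈ C)
    (hsmul : ∀ c : ℝ, 0 ≤ c → ∀ x ∈ C, c • x ∈ C) (h0 : (0 : E) ∈ C)
    (μ : Measure α) [IsFiniteMeasure μ] (f : α → E) :
    infDist (∫ a, f a ∂μ) C ≤ ∫ a, infDist (f a) C ∂μ := by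
  by_cases hf : Integrable f μ
  swap
  · rw [integral_undef hf, infDist_zero_of_mem h0]
    exact integral_nonneg fun _ => infDist_nonneg
  rcases eq_zero_or_neZero μ with rfl | _
  · simp [infDist_zero_of_mem h0]
  have hfC : Integrable (fun a => infDist (f a) C) μ :=
    hf.norm.mono' ((continuous_infDist_pt C).comp_aestronglyMeasurable hf.1)
      (ae_of_all _ fun a => by
        simpa [abs_of_nonneg infDist_nonneg] using infDist_le_dist_of_mem (x := f a) h0)
  have hjensen := (convexOn_infDist hadd hsmul ⟨0, h0⟩).map_average_le
    (continuous_infDist_pt C).continuousOn isClosed_univ (ae_of_all _ fun _ => mem_univ _) hf hfC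
  rw [← measure_smul_average, ← measure_smul_average, smul_eq_mul]
  exact (infDist_smul_le hsmul ⟨0, h0⟩ measureReal_nonneg _).trans
    (mul_le_mul_of_nonneg_left hjensen measureReal_nonneg)

end Cone

section Gronwall

variable {k d : ℝ → ℝ}

theorem exists_pos_intervalIntegral_le (hk : IntervalIntegrable k volume 0 1) {ε : ℝ}
    (hε : 0 < ε) : ∃ δ > 0, ∫ s in 0..δ, k s ≤ ε := by
  have hcont :=
    intervalIntegral.continuousOn_primitive_interval' hk left_mem_uIcc 0 left_mem_uIcc
  have hsmall : ∀ᶠ δ in 𝓝[>] 0, ∫ s in 0..δ, k s < ε := by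
    refine (nhdsWithin_le_of_mem ?_) (hcont.eventually_lt continuousWithinAt_const ?_)
    · simpa using Icc_mem_nhdsGT zero_lt_one
    · simpa using hε
  obtain ⟨δ, hδ, hpos⟩ := (hsmall.and self_mem_nhdsWithin).exists
  exact ⟨δ, hpos, hδ.le⟩

theorem IntervalIntegrable.comp_sub_left_zero {t : ℝ} (hk : IntervalIntegrable k volume 0 t) :
    IntervalIntegrable (fun s => k (t - s)) volume 0 t := by
  simpa using (hk.comp_sub_left t).symm

theorem IntervalIntegrable.comp_sub_mul {t : ℝ} (hk : IntervalIntegrable k volume 0 t)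
    (hd : ContinuousOn d (Icc 0 t)) (ht : 0 ≤ t) :
    IntervalIntegrable (fun s => k (t - s) * d s) volume 0 t :=
  hk.comp_sub_left_zero.mul_continuousOn (by rwa [uIcc_of_le ht])

theorem integral_comp_sub_mul_le (hk0 : ∀ s, 0 ≤ k s) {a t M : ℝ}
    (hk : IntervalIntegrable k volume 0 t) (hd : ContinuousOn d (Icc 0 t)) (ha : 0 ≤ a)
    (hat : a ≤ t) (hzero : ∀ s ∈ Icc 0 a, d s = 0) (hM : ∀ s ∈ Icc a t, d s ≤ M) :
    ∫ s in 0..t, k (t - s) * d s ≤ (∫ s in 0..t - a, k s) * M := by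
  have hint := hk.comp_sub_mul hd (ha.trans hat)
  have hsub : uIcc a t ⊆ uIcc 0 t := uIcc_subset_uIcc (mem_uIcc_of_le ha hat) right_mem_uIcc
  rw [← intervalIntegral.integral_add_adjacent_intervals (b := a)
      (hint.mono_set (uIcc_subset_uIcc left_mem_uIcc (mem_uIcc_of_le ha hat)))
      (hint.mono_set hsub),
    intervalIntegral.integral_congr (g := fun _ => 0) fun s hs => by
      simp [hzero s (by rwa [uIcc_of_le ha] at hs)],
    intervalIntegral.integral_zero, zero_add]
  calc ∫ s in a..t, k (t - s) * d s ≤ ∫ s in a..t, k (t - s) * M :=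
        intervalIntegral.integral_mono_on hat (hint.mono_set hsub)
          ((hk.comp_sub_left_zero.mono_set hsub).mul_const M) fun s hs =>
            mul_le_mul_of_nonneg_left (hM s hs) (hk0 _)
    _ = (∫ s in 0..t - a, k s) * M := by
        rw [intervalIntegral.integral_mul_const, intervalIntegral.integral_comp_sub_left, sub_self]

theorem eq_zero_of_le_integral_comp_sub_mul (hk0 : ∀ s, 0 ≤ k s)
    (hk : ∀ t, 0 ≤ t → IntervalIntegrable k volume 0 t) (hd : ContinuousOn d (Ici 0))
    (hd0 : ∀ s, 0 ≤ d s) (hle : ∀ t, 0 ≤ t → d t ≤ ∫ s in 0..t, k (t - s) * d s) :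
    ∀ t, 0 ≤ t → d t = 0 := by
  obtain ⟨δ, hδ, hkδ⟩ := exists_pos_intervalIntegral_le (hk 1 zero_le_one) (half_pos one_pos)
  -- At a maximum point `tm` of `d` on `[a, a + δ]`, `d tm ≤ (∫ s in 0..δ, k s) * d tm ≤ d tm / 2`.
  have step : ∀ a, 0 ≤ a → (∀ s ∈ Icc 0 a, d s = 0) → ∀ s ∈ Icc 0 (a + δ), d s = 0 := by
    intro a ha hzero
    obtain ⟨tm, htm, hmax⟩ := (isCompact_Icc (a := a) (b := a + δ)).exists_isMaxOn
      (nonempty_Icc.2 (by linarith)) (hd.mono fun s hs => ha.trans hs.1)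
    have htm0 : 0 ≤ tm := ha.trans htm.1
    have hbound := integral_comp_sub_mul_le hk0 (hk tm htm0) (hd.mono Icc_subset_Ici_self) ha
      htm.1 hzero fun s hs => hmax ⟨hs.1, hs.2.trans htm.2⟩
    have hkm : ∫ s in 0..tm - a, k s ≤ 1 / 2 :=
      (intervalIntegral.integral_mono_interval le_rfl (by linarith [htm.1]) (by linarith [htm.2])
        (ae_of_all _ hk0) (hk δ hδ.le)).trans hkδ
    have hdtm : d tm ≤ 0 := by nlinarith [hle tm htm0, hd0 tm]
    intro s hs
    rcases le_total s a with hsa | hsa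
    · exact hzero s ⟨hs.1, hsa⟩
    · exact le_antisymm ((hmax ⟨hsa, hs.2⟩).trans hdtm) (hd0 s)
  have hwindows : ∀ n : ℕ, ∀ s ∈ Icc 0 (n * δ), d s = 0 := by
    intro n
    induction n with
    | zero => simpa using le_antisymm (by simpa using hle 0 le_rfl) (hd0 0)
    | succ n ih => simpa [add_mul] using step _ (by positivity) ih
  intro t ht
  obtain ⟨n, hn⟩ := exists_nat_ge (t / δ)
  exact hwindows n t ⟨ht, by rwa [div_le_iff₀ hδ] at hn⟩

end Gronwall

section Volterra

variable {E : Type*} [NormedAddCommGroup E] [NormedSpace ℝ E] [CompleteSpace E] {C : Set E}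

theorem volterra_mem_of_sub_integral_mem (hCclosed : IsClosed C)
    (hadd : ∀ a ∈ C, ∀ b ∈ C, a + b ∈ C) (hsmul : ∀ c : ℝ, 0 ≤ c → ∀ x ∈ C, c • x ∈ C)
    {L : ℝ → E →L[ℝ] E} (hLC : ∀ u, 0 < u → MapsTo (L u) C C) {k : ℝ → ℝ} (hk0 : ∀ u, 0 ≤ k u)
    (hk : ∀ t, 0 ≤ t → IntervalIntegrable k volume 0 t) (hLk : ∀ u, 0 < u → ‖L u‖ ≤ k u)
    {lam : ℝ → E} (hlam : ContinuousOn lam (Ici 0))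
    (hsol : ∀ t, 0 ≤ t → lam t - ∫ s in Ioc 0 t, L (t - s) (lam s) ∈ C) :
    ∀ t, 0 ≤ t → lam t ∈ C := by
  have hlam0 : lam 0 ∈ C := by simpa using hsol 0 le_rfl
  have hC : C.Nonempty := ⟨_, hlam0⟩
  have h0 : (0 : E) ∈ C := by simpa using hsmul 0 le_rfl _ hlam0
  set d := fun t => infDist (lam t) C
  have hd : ContinuousOn d (Ici 0) := (continuous_infDist_pt C).comp_continuousOn hlam
  have hle : ∀ t, 0 ≤ t → d t ≤ ∫ s in 0..t, k (t - s) * d s := by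
    intro t ht
    set I := ∫ s in Ioc 0 t, L (t - s) (lam s)
    have hpt : ∀ s < t, infDist (L (t - s) (lam s)) C ≤ k (t - s) * d s := by
      intro s hs
      have := (L (t - s)).lipschitz.infDist_le_mul (hLC _ (sub_pos.2 hs)) hC (lam s)
      rw [coe_nnnorm] at this
      exact this.trans (mul_le_mul_of_nonneg_right (hLk _ (sub_pos.2 hs)) infDist_nonneg)
    calc d t = infDist ((lam t - I) + I) C := by rw [sub_add_cancel]
      _ ≤ infDist (lam t - I) C + infDist I C := infDist_add_le hadd hC _ _
      _ = infDist I C := by rw [infDist_zero_of_mem (hsol t ht), zero_add]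
      _ ≤ ∫ s in Ioc 0 t, infDist (L (t - s) (lam s)) C := infDist_integral_le hadd hsmul h0 _ _
      _ ≤ ∫ s in Ioc 0 t, k (t - s) * d s := by
        refine integral_mono_of_nonneg (ae_of_all _ fun _ => infDist_nonneg)
          ((hk t ht).comp_sub_mul (hd.mono Icc_subset_Ici_self) ht).1 ?_
        filter_upwards [ae_restrict_mem measurableSet_Ioc,
          ae_restrict_of_ae (Measure.ae_ne volume t)] with s hs hst
        exact hpt s (lt_of_le_of_ne hs.2 hst)
      _ = ∫ s in 0..t, k (t - s) * d s := (intervalIntegral.integral_of_le ht).symm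
  have hd0 := eq_zero_of_le_integral_comp_sub_mul hk0 hk hd (fun _ => infDist_nonneg) hle
  exact fun t ht => (hCclosed.mem_iff_infDist_zero hC).2 (hd0 t ht)

end Volterra

theorem integrable_norm_of_integrable_norm_sq {α F : Type*} [MeasurableSpace α]
    [NormedAddCommGroup F] {μ : Measure α} [IsFiniteMeasure μ] {g : α → F}
    (h : Integrable (fun x => ‖g x‖ ^ 2) μ) : Integrable (fun x => ‖g x‖) μ := by
  have hmeas : AEStronglyMeasurable (fun x => ‖g x‖) μ := by
    simpa [Real.sqrt_sq (norm_nonneg _)] using Real.continuous_sqrt.comp_aestronglyMeasurable h.1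
  refine ((integrable_const 1).add h).mono' hmeas (ae_of_all _ fun x => ?_)
  simp only [norm_norm, Pi.add_apply]
  nlinarith [sq_nonneg (‖g x‖ - 1), norm_nonneg (g x)]

section AnticommComp

variable {d : ℕ} {E : Type*} [NormedAddCommGroup E] [NormedSpace ℝ E]
  (mulL : ↥(symMat d) →L[ℝ] E →L[ℝ] E) (mulR : E →L[ℝ] ↥(symMat d) →L[ℝ] E)
  (β : E →L[ℝ] ↥(symMat d))

def anticommComp (x : E) : E →L[ℝ] E :=
  (mulR x).comp β + (ContinuousLinearMap.apply ℝ E x).comp (mulL.comp β)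

@[simp]
theorem anticommComp_apply (x y : E) :
    anticommComp mulL mulR β x y = mulR x (β y) + mulL (β y) x :=
  rfl

theorem norm_anticommComp_le (hmulL : ∀ (A : ↥(symMat d)) (x : E), ‖mulL A x‖ ≤ ‖A‖ * ‖x‖)
    (hmulR : ∀ (x : E) (A : ↥(symMat d)), ‖mulR x A‖ ≤ ‖x‖ * ‖A‖) {K : ℝ} (hK : 0 ≤ K)
    (hβ : ∀ y, ‖β y‖ ≤ K * ‖y‖) (x : E) : ‖anticommComp mulL mulR β x‖ ≤ 2 * K * ‖x‖ := by
  refine ContinuousLinearMap.opNorm_le_bound _ (by positivity) fun y => ?_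
  calc ‖anticommComp mulL mulR β x y‖ ≤ ‖x‖ * ‖β y‖ + ‖β y‖ * ‖x‖ := by
        rw [anticommComp_apply]
        exact (norm_add_le _ _).trans (add_le_add (hmulR _ _) (hmulL _ _))
    _ = 2 * ‖x‖ * ‖β y‖ := by ring
    _ ≤ 2 * ‖x‖ * (K * ‖y‖) := by gcongr; exact hβ y
    _ = 2 * K * ‖x‖ * ‖y‖ := by ring

end AnticommComp

universe u

theorem volterra_cone_invariance_general
    {d : ℕ} {E : Type u} [NormedAddCommGroup E] [NormedSpace ℝ E] [CompleteSpace E]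
    (mulL : ↥(symMat d) →L[ℝ] E →L[ℝ] E) (mulR : E →L[ℝ] ↥(symMat d) →L[ℝ] E)
    (hmulL : ∀ (A : ↥(symMat d)) (x : E), ‖mulL A x‖ ≤ ‖A‖ * ‖x‖)
    (hmulR : ∀ (x : E) (A : ↥(symMat d)), ‖mulR x A‖ ≤ ‖x‖ * ‖A‖)
    (S : ℝ → E →L[ℝ] E)
    (β : E →L[ℝ] ↥(symMat d)) (κ : ℝ → E)
    (hκsq : ∀ t : ℝ, 0 < t → IntegrableOn (fun s => ‖κ s‖ ^ 2) (Ioc 0 t))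
    (C : Set E) (hCclosed : IsClosed C) (hCconv : Convex ℝ C)
    (hCcone : ∀ c : ℝ, 0 ≤ c → ∀ x ∈ C, c • x ∈ C)
    (hSC : ∀ t : ℝ, 0 ≤ t → ∀ x ∈ C, S t x ∈ C)
    (hκC : ∀ t : ℝ, 0 < t → κ t ∈ C)
    (hβC : ∀ x ∈ C, ((β x : Matrix (Fin d) (Fin d) ℝ)).PosSemidef)
    (hmulC : ∀ x ∈ C, ∀ A : ↥(symMat d), ((A : Matrix (Fin d) (Fin d) ℝ)).PosSemidef →
      mulR x A + mulL A x ∈ C) :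
    ∀ (x₀ : E) (lam : ℝ → E), x₀ ∈ C → IsMildSol mulL mulR S β κ x₀ lam →
      ∀ t : ℝ, 0 ≤ t → lam t ∈ C := by
  rintro x₀ lam hx₀ ⟨hlam, -, hmild⟩
  obtain ⟨K, hK, hβ⟩ := β.bound
  refine volterra_mem_of_sub_integral_mem hCclosed
    (fun a ha b hb => hCconv.add_mem_of_smul_mem hCcone ha hb) hCcone
    (L := fun u => anticommComp mulL mulR β (κ u)) (k := fun u => 2 * K * ‖κ u‖) ?_
    (fun u => by positivity) ?_
    (fun u _ => norm_anticommComp_le mulL mulR β hmulL hmulR hK.le hβ (κ u)) hlam ?_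
  · intro u hu x hx
    simpa using hmulC _ (hκC u hu) _ (hβC x hx)
  · intro t ht
    rcases ht.eq_or_lt with rfl | ht
    · exact IntervalIntegrable.refl
    · exact (intervalIntegrable_iff_integrableOn_Ioc_of_le ht.le).2
        ((integrable_norm_of_integrable_norm_sq (hκsq t ht)).const_mul _)
  · intro t ht
    simpa [hmild t ht] using hSC t ht x₀ hx₀

/-- **Cone invariance for the lifted linear Volterra equation.**  If the closed convex cone
`C` is invariant under the semigroup, `κ` takes values in `C`, `β` maps `C` into the
positive semidefinite matrices, and `μ·A + A·μ ∈ C` for `μ ∈ C` and `A` positive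
semidefinite, then mild solutions starting in `C` stay in `C`. -/
theorem volterra_cone_invariance
    {d : ℕ} {E : Type u} [NormedAddCommGroup E] [NormedSpace ℝ E] [CompleteSpace E]
    (mulL : ↥(symMat d) →L[ℝ] E →L[ℝ] E) (mulR : E →L[ℝ] ↥(symMat d) →L[ℝ] E)
    (hmulL : ∀ (A : ↥(symMat d)) (x : E), ‖mulL A x‖ ≤ ‖A‖ * ‖x‖)
    (hmulR : ∀ (x : E) (A : ↥(symMat d)), ‖mulR x A‖ ≤ ‖x‖ * ‖A‖)
    (S : ℝ → E →L[ℝ] E) (hS0 : S 0 = ContinuousLinearMap.id ℝ E)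
    (hSsg : ∀ s t : ℝ, 0 ≤ s → 0 ≤ t → S (s + t) = (S s).comp (S t))
    (hScont : ∀ x : E, ContinuousOn (fun t => S t x) (Ici 0))
    (β : E →L[ℝ] ↥(symMat d)) (κ : ℝ → E)
    (hκS : ∀ t s : ℝ, 0 < t → 0 < s → S t (κ s) = κ (t + s))
    (hκsq : ∀ t : ℝ, 0 < t → IntegrableOn (fun s => ‖κ s‖ ^ 2) (Ioc 0 t))
    (C : Set E) (hCclosed : IsClosed C) (hCconv : Convex ℝ C)
    (hCcone : ∀ c : ℝ, 0 ≤ c → ∀ x ∈ C, c • x ∈ C)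
    (hSC : ∀ t : ℝ, 0 ≤ t → ∀ x ∈ C, S t x ∈ C)
    (hκC : ∀ t : ℝ, 0 < t → κ t ∈ C)
    (hβC : ∀ x ∈ C, ((β x : Matrix (Fin d) (Fin d) ℝ)).PosSemidef)
    (hmulC : ∀ x ∈ C, ∀ A : ↥(symMat d), ((A : Matrix (Fin d) (Fin d) ℝ)).PosSemidef →
      mulR x A + mulL A x ∈ C) :
    ∀ (x₀ : E) (lam : ℝ → E), x₀ ∈ C → IsMildSol mulL mulR S β κ x₀ lam →
      ∀ t : ℝ, 0 ≤ t → lam t ∈ C :=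
  volterra_cone_invariance_general mulL mulR hmulL hmulR S β κ hκsq C hCclosed hCconv hCcone hSC hκC
    hβC hmulC
end
end

section
/- Let n, d ∈ ℕ, t > 0, let γ be the product probability measure on ℝ^{n×d} under which the n·d entries are i.i.d. centered Gaussian with variance t, let a ∈ ℝ^{d×n}, and let b be a symmetric positive semidefinite d×d real matrix. Then ∫_{ℝ^{n×d}} exp( −2 Tr(W a) − Tr(b Wᵀ W) ) γ(dW) = det(2tb + I_d)^{−n/2} · exp( 2 Tr( aᵀ (2b + t^{-1} I_d)^{-1} a ) ), where I_d is the d×d identity matrix and Tr denotes the trace. -/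
/-!
The integrand factorizes over the `n` rows of `W`, which are i.i.d. `N(0, t I_d)`, so everything
reduces to the Laplace transform `E[exp(-2 c ⬝ x - x ⬝ b x)]` of a single row `x`. Writing
`b = U D Uᵀ` with `U` orthogonal and using that `N(0, t I_d)` is invariant under `U` (its
characteristic function `exp(-t‖u‖²/2)` is), this becomes a product of one-dimensional
integrals `E[exp(-m y² - 2 c y)] = (2tm + 1)^(-1/2) exp(2c² / (2m + t⁻¹))`, computed by
completing the square.
-/

open scoped Matrix NNReal
open MeasureTheory Real ProbabilityTheory Matrix WithLp

lemma integral_exp_neg_mul_sq_sub_mul {m : ℝ} (hm : 0 < m) (c : ℝ) :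
    ∫ y : ℝ, exp (-(m * y ^ 2) - c * y) = √(π / m) * exp (c ^ 2 / (4 * m)) := by
  have h : ∀ y : ℝ, exp (-(m * y ^ 2) - c * y)
      = exp (-m * (y + c / (2 * m)) ^ 2) * exp (c ^ 2 / (4 * m)) := by
    intro y
    rw [← exp_add]
    congr 1
    field_simp
    ring
  simp_rw [h, integral_mul_const]
  rw [integral_add_right_eq_self (fun y => exp (-m * y ^ 2)) (c / (2 * m)), integral_gaussian]

lemma integral_exp_neg_mul_sq_sub_mul_gaussianReal {t : ℝ≥0} (ht : t ≠ 0) {m : ℝ}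
    (hm : 0 ≤ m) (c : ℝ) :
    ∫ y, exp (-(m * y ^ 2) - 2 * c * y) ∂gaussianReal 0 t
      = (2 * t * m + 1) ^ (-(1 : ℝ) / 2) * exp (2 * c ^ 2 / (2 * m + (t : ℝ)⁻¹)) := by
  have ht' : (0 : ℝ) < t := by positivity
  have hM : 0 < m + (2 * t : ℝ)⁻¹ := by positivity
  have hdens : ∀ y : ℝ, gaussianPDFReal 0 t y * exp (-(m * y ^ 2) - 2 * c * y)
      = (√(2 * π * t))⁻¹ * exp (-((m + (2 * t : ℝ)⁻¹) * y ^ 2) - 2 * c * y) := by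
    intro y
    rw [gaussianPDFReal, mul_assoc, ← exp_add]
    congr 2
    field_simp
    ring
  simp_rw [integral_gaussianReal_eq_integral_smul ht, smul_eq_mul, hdens, integral_const_mul,
    integral_exp_neg_mul_sq_sub_mul hM, ← mul_assoc]
  congr 1
  · have h : (2 * π * t)⁻¹ * (π / (m + (2 * t : ℝ)⁻¹)) = (2 * t * m + 1)⁻¹ := by
      field_simp
    rw [← sqrt_inv, ← sqrt_mul (by positivity), h, sqrt_eq_rpow, inv_rpow (by positivity),
      ← rpow_neg (by positivity)]
    norm_num
  · congr 1
    field_simp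
    ring

section MatrixAlgebra

variable {R : Type*} [CommSemiring R] {ι κ : Type*}

lemma smul_diagonal_add_smul_one [DecidableEq ι] (D : ι → R) (α β : R) :
    α • diagonal D + β • (1 : Matrix ι ι R) = diagonal fun j => α * D j + β := by
  rw [smul_one_eq_diagonal, ← diagonal_smul, diagonal_add]
  rfl

variable [Fintype ι] [Fintype κ]

lemma dotProduct_conj_mulVec (U : Matrix κ ι R) (M : Matrix ι ι R) (x : κ → R) :
    x ⬝ᵥ (U * M * Uᵀ) *ᵥ x = (Uᵀ *ᵥ x) ⬝ᵥ M *ᵥ (Uᵀ *ᵥ x) := by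
  rw [← mulVec_mulVec, ← mulVec_mulVec, dotProduct_mulVec, ← mulVec_transpose]

lemma trace_mul_eq_sum_dotProduct (A : Matrix κ ι R) (B : Matrix ι κ R) :
    (A * B).trace = ∑ i, Bᵀ i ⬝ᵥ A i := by
  simp only [trace, diag, mul_apply', dotProduct_comm]
  rfl

lemma trace_transpose_mul_mul (A : Matrix κ ι R) (M : Matrix κ κ R) :
    (Aᵀ * M * A).trace = ∑ i, Aᵀ i ⬝ᵥ M *ᵥ Aᵀ i := by
  simp only [trace, diag, mul_apply', dotProduct_mulVec]
  rfl

lemma trace_mul_transpose_mul (M : Matrix ι ι R) (A : Matrix κ ι R) :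
    (M * Aᵀ * A).trace = ∑ i, A i ⬝ᵥ M *ᵥ A i := by
  rw [trace_mul_cycle]
  exact trace_transpose_mul_mul Aᵀ M

lemma inv_diagonal_of_ne_zero {K : Type*} [Field K] [DecidableEq ι] {e : ι → K}
    (he : ∀ j, e j ≠ 0) : (diagonal e)⁻¹ = diagonal fun j => (e j)⁻¹ :=
  inv_eq_left_inv <| by
    rw [diagonal_mul_diagonal, ← diagonal_one]
    exact congrArg diagonal (funext fun j => inv_mul_cancel₀ (he j))

end MatrixAlgebra

section Orthogonal

variable {ι : Type*} [Fintype ι] [DecidableEq ι] {U : Matrix ι ι ℝ}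

lemma smul_conj_add_smul_one (hU : U ∈ orthogonalGroup ι ℝ) (M : Matrix ι ι ℝ) (α β : ℝ) :
    α • (U * M * Uᵀ) + β • 1 = U * (α • M + β • 1) * Uᵀ := by
  rw [Matrix.mul_add, Matrix.add_mul, Matrix.mul_smul, Matrix.smul_mul, Matrix.mul_smul,
    Matrix.smul_mul, Matrix.mul_one, (mem_orthogonalGroup_iff ι ℝ).mp hU]

lemma det_conj_of_mem_orthogonalGroup (hU : U ∈ orthogonalGroup ι ℝ) (M : Matrix ι ι ℝ) :
    (U * M * Uᵀ).det = M.det := by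
  rw [det_mul, det_mul, mul_right_comm, ← det_mul, (mem_orthogonalGroup_iff ι ℝ).mp hU,
    det_one, one_mul]

lemma inv_conj_of_mem_orthogonalGroup (hU : U ∈ orthogonalGroup ι ℝ) (M : Matrix ι ι ℝ) :
    (U * M * Uᵀ)⁻¹ = U * M⁻¹ * Uᵀ := by
  rw [Matrix.mul_inv_rev, Matrix.mul_inv_rev,
    inv_eq_left_inv ((mem_orthogonalGroup_iff' ι ℝ).mp hU),
    inv_eq_left_inv ((mem_orthogonalGroup_iff ι ℝ).mp hU), Matrix.mul_assoc]

lemma mulVec_dotProduct_conj_mulVec_mulVec (hU : U ∈ orthogonalGroup ι ℝ) (M : Matrix ι ι ℝ)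
    (y : ι → ℝ) : (U *ᵥ y) ⬝ᵥ (U * M * Uᵀ) *ᵥ (U *ᵥ y) = y ⬝ᵥ M *ᵥ y := by
  rw [dotProduct_conj_mulVec, mulVec_mulVec, (mem_orthogonalGroup_iff' ι ℝ).mp hU, one_mulVec]

lemma Matrix.PosSemidef.exists_orthogonal_diagonal {b : Matrix ι ι ℝ}
    (hb : b.PosSemidef) :
    ∃ U ∈ orthogonalGroup ι ℝ, ∃ D : ι → ℝ, (∀ j, 0 ≤ D j) ∧ b = U * diagonal D * Uᵀ := by
  refine ⟨_, hb.1.eigenvectorUnitary.2, _, hb.eigenvalues_nonneg, ?_⟩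
  simpa [star_eq_conjTranspose] using hb.1.spectral_theorem

end Orthogonal

section GaussianVector

variable {ι : Type*} [Fintype ι]

lemma charFun_map_linearIsometryEquiv {E : Type*} [NormedAddCommGroup E] [InnerProductSpace ℝ E]
    [MeasurableSpace E] [BorelSpace E] (μ : Measure E) (f : E ≃ₗᵢ[ℝ] E) (u : E) :
    charFun (μ.map f) u = charFun μ (f.symm u) := by
  rw [charFun_apply, charFun_apply, integral_map (by fun_prop) (by fun_prop)]
  simp_rw [f.inner_map_eq_flip]

lemma charFun_map_toLp_pi_gaussianReal (t : ℝ≥0) (u : EuclideanSpace ℝ ι) :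
    charFun ((Measure.pi fun _ : ι => gaussianReal 0 t).map (toLp 2)) u
      = Complex.exp (-(t * ‖u‖ ^ 2 / 2)) := by
  simp_rw [charFun_pi, charFun_gaussianReal, ← Complex.exp_sum]
  rw [← Complex.ofReal_pow, EuclideanSpace.real_norm_sq_eq]
  push_cast
  simp [Finset.mul_sum, Finset.sum_div]

lemma map_linearIsometryEquiv_map_toLp_pi_gaussianReal (t : ℝ≥0)
    (f : EuclideanSpace ℝ ι ≃ₗᵢ[ℝ] EuclideanSpace ℝ ι) :
    ((Measure.pi fun _ : ι => gaussianReal 0 t).map (toLp 2)).map f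
      = (Measure.pi fun _ : ι => gaussianReal 0 t).map (toLp 2) := by
  refine Measure.ext_of_charFun (funext fun u => ?_)
  rw [charFun_map_linearIsometryEquiv, charFun_map_toLp_pi_gaussianReal,
    charFun_map_toLp_pi_gaussianReal, LinearIsometryEquiv.norm_map]

lemma measurePreserving_mulVec_pi_gaussianReal [DecidableEq ι] {U : Matrix ι ι ℝ}
    (hU : U ∈ orthogonalGroup ι ℝ) (t : ℝ≥0) :
    MeasurePreserving (U *ᵥ ·) (Measure.pi fun _ : ι => gaussianReal 0 t)
      (Measure.pi fun _ : ι => gaussianReal 0 t) := by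
  set γ := Measure.pi fun _ : ι => gaussianReal 0 t
  let f := Unitary.linearIsometryEquiv ⟨toEuclideanCLM (𝕜 := ℝ) U, Unitary.map_mem _ hU⟩
  have hf : (U *ᵥ ·) = ofLp ∘ f ∘ toLp 2 := rfl
  have hγ : (γ.map (toLp 2)).map ofLp = γ := by
    rw [Measure.map_map (by fun_prop) (by fun_prop)]
    exact Measure.map_id
  refine ⟨by fun_prop, ?_⟩
  rw [hf, ← Measure.map_map (by fun_prop) (by fun_prop),
    ← Measure.map_map (by fun_prop) (by fun_prop),
    map_linearIsometryEquiv_map_toLp_pi_gaussianReal, hγ]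

lemma integral_exp_diagonal_quadratic_pi_gaussianReal [DecidableEq ι] {t : ℝ≥0} (ht : t ≠ 0)
    {D : ι → ℝ} (hD : ∀ j, 0 ≤ D j) (c : ι → ℝ) :
    ∫ x, exp (-2 * (c ⬝ᵥ x) - x ⬝ᵥ diagonal D *ᵥ x) ∂(Measure.pi fun _ : ι => gaussianReal 0 t)
      = ∏ j, (2 * t * D j + 1) ^ (-(1 : ℝ) / 2)
          * exp (2 * c j ^ 2 / (2 * D j + (t : ℝ)⁻¹)) := by
  have h : ∀ x : ι → ℝ, exp (-2 * (c ⬝ᵥ x) - x ⬝ᵥ diagonal D *ᵥ x)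
      = ∏ j, exp (-(D j * x j ^ 2) - 2 * c j * x j) := by
    intro x
    rw [← exp_sum]
    simp only [dotProduct, mulVec_diagonal, Finset.mul_sum, ← Finset.sum_sub_distrib]
    exact congrArg exp (Finset.sum_congr rfl fun j _ => by ring)
  simp_rw [h, integral_fintype_prod_eq_prod
      (f := fun j y => exp (-(D j * y ^ 2) - 2 * c j * y)),
    integral_exp_neg_mul_sq_sub_mul_gaussianReal ht (hD _)]

theorem integral_exp_quadratic_pi_gaussianReal [DecidableEq ι] {t : ℝ≥0} (ht : t ≠ 0)
    {b : Matrix ι ι ℝ} (hb : b.PosSemidef) (c : ι → ℝ) :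
    ∫ x, exp (-2 * (c ⬝ᵥ x) - x ⬝ᵥ b *ᵥ x) ∂(Measure.pi fun _ : ι => gaussianReal 0 t)
      = ((2 * t : ℝ) • b + 1).det ^ (-(1 : ℝ) / 2)
        * exp (2 * (c ⬝ᵥ ((2 : ℝ) • b + (t : ℝ)⁻¹ • 1)⁻¹ *ᵥ c)) := by
  obtain ⟨U, hU, D, hD, rfl⟩ := hb.exists_orthogonal_diagonal
  have hcont : Continuous fun x : ι → ℝ =>
      exp (-2 * (c ⬝ᵥ x) - x ⬝ᵥ (U * diagonal D * Uᵀ) *ᵥ x) := by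
    fun_prop
  rw [← (measurePreserving_mulVec_pi_gaussianReal hU t).map_eq,
    integral_map (by fun_prop) hcont.aestronglyMeasurable]
  have hlin : ∀ y, c ⬝ᵥ U *ᵥ y = (Uᵀ *ᵥ c) ⬝ᵥ y := fun y => by
    rw [dotProduct_mulVec, mulVec_transpose]
  simp_rw [mulVec_dotProduct_conj_mulVec_mulVec hU, hlin]
  rw [integral_exp_diagonal_quadratic_pi_gaussianReal ht hD, Finset.prod_mul_distrib, ← exp_sum,
    finsetProd_rpow _ _ fun j _ => by have := hD j; positivity]
  have hpos : ∀ j, 0 < 2 * D j + (t : ℝ)⁻¹ := fun j => by have := hD j; positivity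
  congr 2
  · rw [← one_smul ℝ (1 : Matrix ι ι ℝ), smul_conj_add_smul_one hU,
      det_conj_of_mem_orthogonalGroup hU, smul_diagonal_add_smul_one, det_diagonal]
  · rw [smul_conj_add_smul_one hU, inv_conj_of_mem_orthogonalGroup hU, dotProduct_conj_mulVec,
      smul_diagonal_add_smul_one, inv_diagonal_of_ne_zero fun j => (hpos j).ne']
    simp only [dotProduct, mulVec_diagonal, Finset.mul_sum]
    exact Finset.sum_congr rfl fun j _ => by ring

end GaussianVector

/-- **Laplace transform of the square of a matrix Gaussian.**  For an `n × d` matrix `W`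
of i.i.d. centered Gaussian entries with variance `t`,
`E[exp(-2 Tr(W a) - Tr(b Wᵀ W))] = det(2tb + I)^{-n/2} exp(2 Tr(aᵀ (2b + t⁻¹ I)⁻¹ a))`. -/
theorem matrix_gaussian_laplace_transform
    (n d : ℕ) (t : ℝ≥0) (ht : 0 < t)
    (a : Matrix (Fin d) (Fin n) ℝ) (b : Matrix (Fin d) (Fin d) ℝ) (hb : b.PosSemidef) :
    (∫ W : Fin n → Fin d → ℝ,
        Real.exp (-2 * (Matrix.of W * a).trace - (b * (Matrix.of W)ᵀ * Matrix.of W).trace)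
        ∂(Measure.pi fun _ : Fin n => Measure.pi fun _ : Fin d =>
            ProbabilityTheory.gaussianReal 0 t)) =
      ((((2 : ℝ) * t) • b + 1).det) ^ (-(n : ℝ) / 2) *
        Real.exp (2 * (aᵀ * ((2 : ℝ) • b + (t : ℝ)⁻¹ • 1)⁻¹ * a).trace) := by
  have hrows : ∀ W : Fin n → Fin d → ℝ,
      exp (-2 * (of W * a).trace - (b * (of W)ᵀ * of W).trace)
        = ∏ i, exp (-2 * (aᵀ i ⬝ᵥ W i) - W i ⬝ᵥ b *ᵥ W i) := by
    intro W
    rw [← exp_sum, trace_mul_eq_sum_dotProduct, trace_mul_transpose_mul, Finset.mul_sum,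
      ← Finset.sum_sub_distrib]
    rfl
  have hdet : 0 ≤ ((2 * t : ℝ) • b + 1).det :=
    ((hb.smul (by positivity)).add PosSemidef.one).det_nonneg
  simp_rw [hrows, integral_fintype_prod_eq_prod
      (f := fun i x => exp (-2 * (aᵀ i ⬝ᵥ x) - x ⬝ᵥ b *ᵥ x)),
    integral_exp_quadratic_pi_gaussianReal ht.ne' hb, Finset.prod_mul_distrib, Finset.prod_const,
    ← exp_sum, trace_transpose_mul_mul, Finset.mul_sum, Finset.card_univ, Fintype.card_fin,
    ← rpow_natCast, ← rpow_mul hdet]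
  congr 2
  ring
end

section
/- Let (X, ρ) be a weighted space. For every f ∈ 𝓑^ρ(X) with sup_{x∈X} f(x) > 0 there exists z ∈ X such that ρ(x)^{-1} f(x) ≤ ρ(z)^{-1} f(z) for all x ∈ X, i.e. the function ρ^{-1} f attains its supremum on X. -/
open scoped ENNReal NNReal
open Filter Set MeasureTheory TopologicalSpace

noncomputable section

variable {X : Type*} [TopologicalSpace X] {ρ : X → ℝ}

/-!
For `g = ρ⁻¹ f` with `f ∈ 𝓑^ρ(X)`, `g` is a uniform limit of functions `F / ρ` with `F`
bounded continuous. Since `ρ` is lower semicontinuous (its sublevel sets are compact), each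
`max (F / ρ) c` with `c > 0` is upper semicontinuous, and so is the uniform limit
`max g c`. For `t > 0` the superlevel set `{g ≥ t}` lies in `{F / ρ ≥ t / 2}` for a good
approximant, hence in a sublevel set `{ρ ≤ 2 sup|F| / t}`, so it is compact. If `g x₀ > 0`,
then `max g (g x₀ / 2)` attains its maximum on the compact set `{g ≥ g x₀}`, and that point
maximizes `g`.
-/

theorem upperSemicontinuous_of_uniform_approx {g : X → ℝ}
    (happrox : ∀ ε > 0, ∃ h : X → ℝ, UpperSemicontinuous h ∧ ∀ x, |g x - h x| ≤ ε) :
    UpperSemicontinuous g := by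
  intro x y hy
  obtain ⟨h, hh, hgh⟩ := happrox ((y - g x) / 3) (by linarith)
  have hhx : h x < y - (y - g x) / 3 := by linarith [(abs_le.1 (hgh x)).1]
  filter_upwards [hh x _ hhx] with x' hx'
  linarith [(abs_le.1 (hgh x')).2]

theorem exists_forall_le_of_upperSemicontinuous_max {β : Type*} [LinearOrder β] {g : X → β}
    {x₀ : X} {c : β} (hc : c < g x₀) (hg : UpperSemicontinuous fun x => max (g x) c)
    (hK : IsCompact {x | g x₀ ≤ g x}) : ∃ z, ∀ x, g x ≤ g z := by
  obtain ⟨z, hzK, hz⟩ := (hg.upperSemicontinuousOn {x | g x₀ ≤ g x}).exists_isMaxOn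
    ⟨x₀, le_refl (g x₀)⟩ hK
  refine ⟨z, fun x => ?_⟩
  rcases le_or_gt (g x₀) (g x) with hx | hx
  · calc g x ≤ max (g x) c := le_max_left _ _
      _ ≤ max (g z) c := hz hx
      _ = g z := max_eq_left (hc.trans_le hzK).le
  · exact hx.le.trans hzK

theorem upperSemicontinuous_max_div {F : X → ℝ} (hF : Continuous F) (hρ : LowerSemicontinuous ρ)
    (hρpos : ∀ x, 0 < ρ x) {c : ℝ} (hc : 0 < c) :
    UpperSemicontinuous fun x => max (F x / ρ x) c := by
  refine upperSemicontinuous_iff_isClosed_preimage.2 fun t => ?_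
  rcases le_or_gt t c with htc | htc
  · convert isClosed_univ
    ext x
    simpa using Or.inr htc
  · have ht : 0 < t := hc.trans htc
    have hset : (fun x => max (F x / ρ x) c) ⁻¹' Ici t = {x | ρ x ≤ F x / t} := by
      ext x
      simp only [mem_preimage, mem_Ici, le_max_iff, not_le.2 htc, or_false, mem_ofPred_eq,
        le_div_iff₀ (hρpos x), le_div_iff₀ ht, mul_comm]
    rw [hset]
    exact (lowerSemicontinuous_iff_isClosed_epigraph.1 hρ).preimage
      (continuous_id.prodMk (hF.div_const t))

namespace AdmissibleWeight

theorem isCompact_le (hρ : AdmissibleWeight ρ) (R : ℝ) : IsCompact {x | ρ x ≤ R} := by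
  rcases le_or_gt R 0 with hR | hR
  · convert isCompact_empty
    exact eq_empty_iff_forall_notMem.2 fun x hx => (hρ.pos x).not_ge (le_trans hx hR)
  · exact hρ.isCompact_sublevel R hR

theorem lowerSemicontinuous_s18 [T2Space X] (hρ : AdmissibleWeight ρ) : LowerSemicontinuous ρ :=
  lowerSemicontinuous_iff_isClosed_preimage.2 fun R => (hρ.isCompact_le R).isClosed

end AdmissibleWeight

theorem exists_continuous_abs_sub_div_le (f : calB ρ) {ε : ℝ} (hε : 0 < ε) :
    ∃ F : X → ℝ, Continuous F ∧ (∃ C, ∀ x, |F x| ≤ C) ∧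
      ∀ x, |scaledApp f x - F x / ρ x| ≤ ε := by
  have hf : (f : BddFun X) ∈ closure (preCalB ρ : Set (BddFun X)) := f.2
  obtain ⟨h, ⟨F, hF, hFC, hFh⟩, hdist⟩ := Metric.mem_closure_iff.1 hf ε hε
  refine ⟨F, hF, hFC, fun x => ?_⟩
  rw [← hFh]
  calc |scaledApp f x - h x| = ‖((f : BddFun X) - h) x‖ := rfl
    _ ≤ ‖(f : BddFun X) - h‖ := lp.norm_apply_le_norm ENNReal.top_ne_zero _ x
    _ ≤ ε := (dist_eq_norm (f : BddFun X) h ▸ hdist).le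

variable [T2Space X]

theorem upperSemicontinuous_max_scaledApp (hρ : AdmissibleWeight ρ) (f : calB ρ) {c : ℝ}
    (hc : 0 < c) : UpperSemicontinuous fun x => max (scaledApp f x) c := by
  refine upperSemicontinuous_of_uniform_approx fun ε hε => ?_
  obtain ⟨F, hF, -, hFf⟩ := exists_continuous_abs_sub_div_le f hε
  exact ⟨_, upperSemicontinuous_max_div hF hρ.lowerSemicontinuous_s18 hρ.pos hc,
    fun x => (abs_max_sub_max_le_abs _ _ _).trans (hFf x)⟩

theorem isCompact_le_scaledApp (hρ : AdmissibleWeight ρ) (f : calB ρ) {t : ℝ} (ht : 0 < t) :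
    IsCompact {x | t ≤ scaledApp f x} := by
  obtain ⟨F, -, ⟨C, hC⟩, hFf⟩ := exists_continuous_abs_sub_div_le f (half_pos ht)
  have hclosed : IsClosed {x | t ≤ scaledApp f x} := by
    convert (upperSemicontinuous_iff_isClosed_preimage.1
      (upperSemicontinuous_max_scaledApp hρ f (half_pos ht))) t using 1
    ext x
    simp only [mem_ofPred_eq, mem_preimage, mem_Ici, le_max_iff, not_le.2 (half_lt_self ht),
      or_false]
  refine (hρ.isCompact_le (C / (t / 2))).of_isClosed_subset hclosed fun x hx => ?_
  have hFx : t / 2 ≤ F x / ρ x := by linarith [(abs_le.1 (hFf x)).2, mem_ofPred.1 hx]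
  rw [le_div_iff₀ (hρ.pos x)] at hFx
  rw [mem_ofPred_eq, le_div_iff₀ (half_pos ht)]
  linarith [(abs_le.1 (hC x)).2]

universe u

theorem calB_weighted_sup_attained_general
    {X : Type u} [TopologicalSpace X] [T2Space X]
    {ρ : X → ℝ} (hρ : AdmissibleWeight ρ) (f : calB ρ)
    (hf : ∃ x, 0 < valOf f x) :
    ∃ z, ∀ x, scaledApp f x ≤ scaledApp f z := by
  obtain ⟨x₀, hx₀⟩ := hf
  have hpos : 0 < scaledApp f x₀ := pos_of_mul_pos_right hx₀ (hρ.pos x₀).le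
  exact exists_forall_le_of_upperSemicontinuous_max (half_lt_self hpos)
    (upperSemicontinuous_max_scaledApp hρ f (half_pos hpos)) (isCompact_le_scaledApp hρ f hpos)

/-- For `f ∈ 𝓑^ρ(X)` with positive supremum, the function `ρ⁻¹ f` attains its supremum. -/
theorem calB_weighted_sup_attained
    {X : Type u} [TopologicalSpace X] [T2Space X] [CompletelyRegularSpace X]
    {ρ : X → ℝ} (hρ : AdmissibleWeight ρ) (f : calB ρ)
    (hf : ∃ x, 0 < valOf f x) :
    ∃ z, ∀ x, scaledApp f x ≤ scaledApp f z :=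
  calB_weighted_sup_attained_general hρ f hf

end
end
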